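/- arXiv:2605.16229 — 3 statements merged into one kernel-verified Lean document; each statement's English description precedes it below -/
import Mathlib

section
/- Let p, q ∈ [0,1], set r = min{p, 1−p} and s = min{q, 1−q}, and let m ≥ 2 be an integer. Then the minimum list entropy coupling of Ber(p) against m copies of Ber(q) satisfies: H_m(Ber(p)‖Ber(q)) = 0 if r ≤ m·s, and H_m(Ber(p)‖Ber(q)) = (1 − m·s) · h_b((r − m·s)/(1 − m·s)) if r > m·s, where h_b is the binary entropy function. -/
open scoped Classical BigOperators

noncomputable section

/-- `P` is a probability distribution on the finite type `α`. -/
def IsProbDist {α : Type*} [Fintype α] (P : α → ℝ) : Prop :=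
  (∀ x, 0 ≤ P x) ∧ ∑ x, P x = 1

/-- Shannon conditional entropy `H(X | Y)` of a joint pmf `π`
(first coordinate `X`, second coordinate `Y`), with the convention `0 log 0 = 0`. -/
def condEnt {α β : Type*} [Fintype α] [Fintype β] (π : α → β → ℝ) : ℝ :=
  - ∑ y : β, ∑ x : α, π x y * Real.log (π x y / ∑ x' : α, π x' y)

/-- `π` is a joint distribution of `(X, (Y_i)_{i : ι})` with `X ∼ P` and `Y_i ∼ Q i`. -/
def IsCouplingList {α ι : Type*} {β : ι → Type*} [Fintype α] [Fintype ι]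
    [∀ i, Fintype (β i)] (π : α → ((i : ι) → β i) → ℝ)
    (P : α → ℝ) (Q : (i : ι) → β i → ℝ) : Prop :=
  (∀ x y, 0 ≤ π x y) ∧ (∀ x, ∑ y, π x y = P x) ∧
    (∀ i b, (∑ x, ∑ y, if y i = b then π x y else 0) = Q i b)

/-- Minimum list entropy coupling `H(P ‖ Q_1, …, Q_m)`: the infimum of the
conditional entropy `H(X | Y_1, …, Y_m)` over all couplings with `X ∼ P`, `Y_i ∼ Q i`. -/
def Hlist {α ι : Type*} {β : ι → Type*} [Fintype α] [Fintype ι] [∀ i, Fintype (β i)]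
    (P : α → ℝ) (Q : (i : ι) → β i → ℝ) : ℝ :=
  sInf {h | ∃ π : α → ((i : ι) → β i) → ℝ, IsCouplingList π P Q ∧ condEnt π = h}

/-- Homogeneous minimum list entropy coupling `H_m(P ‖ Q)`. -/
def Hm {α β : Type*} [Fintype α] [Fintype β] (m : ℕ) (P : α → ℝ) (Q : β → ℝ) : ℝ :=
  Hlist (β := fun _ : Fin m => β) P (fun _ => Q)

/-- The binary entropy function `h_b`. -/
def binEnt (t : ℝ) : ℝ := -(t * Real.log t + (1 - t) * Real.log (1 - t))

/-- Bernoulli distribution on `Bool` with mass `p` on `true` (i.e. `P(1) = p`). -/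
def Ber (p : ℝ) : Bool → ℝ := fun b => if b then p else 1 - p

/-! ### Auxiliary facts about the binary entropy function -/

lemma binEnt_eq (t : ℝ) : binEnt t = Real.binEntropy t := by
  simp [binEnt, Real.binEntropy, Real.log_inv]; ring

lemma binEnt_nonneg {t : ℝ} (h0 : 0 ≤ t) (h1 : t ≤ 1) : 0 ≤ binEnt t := by
  rw [binEnt_eq]; exact Real.binEntropy_nonneg h0 h1

lemma binEnt_one_sub (t : ℝ) : binEnt (1 - t) = binEnt t := by
  rw [binEnt_eq, binEnt_eq, Real.binEntropy_one_sub]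

lemma chord1 {c t : ℝ} (hc0 : 0 < c) (ht0 : 0 ≤ t) (htc : t ≤ c) (hc1 : c ≤ 1) :
    (binEnt c / c) * t ≤ binEnt t := by
  have hcon := Real.strictConcave_binEntropy.concaveOn
  have h := hcon.2 (show (0:ℝ) ∈ Set.Icc (0:ℝ) 1 by simp)
    (show c ∈ Set.Icc (0:ℝ) 1 by constructor <;> linarith)
    (show (0:ℝ) ≤ 1 - t/c by
      have : t/c ≤ 1 := by rw [div_le_one hc0]; exact htc
      linarith)
    (div_nonneg ht0 hc0.le) (by ring)
  simp only [smul_eq_mul, mul_zero, zero_add] at h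
  rw [binEnt_eq, binEnt_eq, ← binEnt_eq c]
  calc (binEnt c / c) * t = (1 - t/c) * Real.binEntropy 0 + t/c * Real.binEntropy c := by
        rw [binEnt_eq]; simp [Real.binEntropy_zero]; ring
    _ ≤ Real.binEntropy (t/c * c) := h
    _ = Real.binEntropy t := by rw [div_mul_cancel₀]; exact hc0.ne'

lemma binEnt_mono {c t : ℝ} (hc0 : 0 ≤ c) (hct : c ≤ t) (ht : t ≤ 1/2) :
    binEnt c ≤ binEnt t := by
  rw [binEnt_eq, binEnt_eq]
  rcases eq_or_lt_of_le hct with rfl | h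
  · exact le_refl _
  · exact le_of_lt (Real.binEntropy_strictMonoOn
      (Set.mem_Icc.2 ⟨by linarith, by linarith⟩) (Set.mem_Icc.2 ⟨by linarith, by linarith⟩) h)

lemma binEnt_chord {c t : ℝ} (hc0 : 0 < c) (hc : c ≤ 1/2) (ht0 : 0 ≤ t) (ht1 : t ≤ 1) :
    (binEnt c / c) * min t (min (1-t) c) ≤ binEnt t := by
  have hbc : 0 ≤ binEnt c / c := div_nonneg (binEnt_nonneg hc0.le (by linarith)) hc0.le
  have key : ∀ u : ℝ, 0 ≤ u → u ≤ 1/2 → (binEnt c / c) * min u (min (1-u) c) ≤ binEnt u := by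
    intro u hu0 hu2
    rcases le_total u c with h | h
    · calc (binEnt c / c) * min u (min (1-u) c) ≤ (binEnt c / c) * u := by
            apply mul_le_mul_of_nonneg_left (min_le_left _ _) hbc
        _ ≤ binEnt u := chord1 hc0 hu0 h (by linarith)
    · calc (binEnt c / c) * min u (min (1-u) c) ≤ (binEnt c / c) * c := by
            apply mul_le_mul_of_nonneg_left (le_trans (min_le_right _ _) (min_le_right _ _)) hbc
        _ = binEnt c := by field_simp
        _ ≤ binEnt u := binEnt_mono hc0.le h hu2
  rcases le_total t (1/2) with h | h
  · exact key t ht0 h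
  · have := key (1 - t) (by linarith) (by linarith)
    rw [binEnt_one_sub] at this
    rw [show (1 : ℝ) - (1 - t) = t by ring] at this
    rw [show min t (min (1-t) c) = min (1-t) (min t c) by rw [min_left_comm]]
    exact this

/-! ### Adapters for differing `Fintype` instances -/

lemma sum_univ_ext {X : Type*} {i1 i2 : Fintype X} (f : X → ℝ) :
    (@Finset.univ X i1).sum f = (@Finset.univ X i2).sum f := by
  cases Subsingleton.elim i1 i2; rfl

lemma ite_ext {P : Prop} {h1 h2 : Decidable P} (c d : ℝ) :
    @ite ℝ P h1 c d = @ite ℝ P h2 c d := by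
  cases Subsingleton.elim h1 h2; rfl

lemma ymarg_bridge {m : ℕ} {i1 : Fintype ((i : Fin m) → (fun _ : Fin m => Bool) i)}
    (f g : Bool → ((i : Fin m) → (fun _ : Fin m => Bool) i) → ℝ) (v : ℝ)
    (hfg : ∀ x y, f x y = g x y)
    (h : (∑ x : Bool, (@Finset.univ _ (Pi.instFintype)).sum (g x)) = v) :
    (∑ x : Bool, (@Finset.univ _ i1).sum (f x)) = v := by
  obtain rfl : i1 = Pi.instFintype := Subsingleton.elim _ _
  rw [show f = g from funext fun x => funext fun y => hfg x y]
  exact h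

lemma condEnt_ext {α β : Type*} [Fintype α] {i1 i2 : Fintype β} (π : α → β → ℝ) :
    @condEnt α β _ i1 π = @condEnt α β _ i2 π := by
  cases Subsingleton.elim i1 i2; rfl

/-! ### Special vectors in `Fin m → Bool` and sums of point masses -/

def zv (m : ℕ) : Fin m → Bool := fun _ => false
def ov (m : ℕ) : Fin m → Bool := fun _ => true
def ev {m : ℕ} (i : Fin m) : Fin m → Bool := fun j => decide (j = i)

lemma ev_ne_zv {m : ℕ} (i : Fin m) : ev i ≠ zv m := by
  intro h; have := congrFun h i; simp [ev, zv] at this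

lemma ov_ne_ev {m : ℕ} (hm : 2 ≤ m) (i : Fin m) : ov m ≠ ev i := by
  intro h
  have h2 : ∃ j : Fin m, j ≠ i := by
    rcases i with ⟨iv, hiv⟩
    by_cases h0 : iv = 0
    · exact ⟨⟨1, by omega⟩, by simp [Fin.ext_iff, h0]⟩
    · exact ⟨⟨0, by omega⟩, by simp [Fin.ext_iff]; omega⟩
  obtain ⟨j, hj⟩ := h2
  have := congrFun h j
  simp [ov, ev, hj] at this

lemma sum_delta {m : ℕ} (a : Fin m → Bool) (c : ℝ) :
    ∑ y : Fin m → Bool, (if y = a then c else 0) = c := by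
  simp [Finset.sum_ite_eq' Finset.univ a]

lemma sum_delta_coord {m : ℕ} (a : Fin m → Bool) (c : ℝ) (i : Fin m) (b : Bool) :
    ∑ y : Fin m → Bool, (if y i = b then (if y = a then c else 0) else 0)
      = if a i = b then c else 0 := by
  rw [show (fun y : Fin m → Bool => if y i = b then (if y = a then c else 0) else 0)
      = fun y => if y = a then (if a i = b then c else 0) else 0 from ?_]
  · exact sum_delta a _
  · funext y
    by_cases h : y = a
    · subst h; by_cases hb : y i = b <;> simp [hb]
    · simp [h]

lemma sum_ev_coord {m : ℕ} (c : ℝ) (i : Fin m) :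
    (∑ j : Fin m, if ev j i = true then c else 0) = c := by
  have : ∀ j : Fin m, (if ev j i = true then c else 0) = if i = j then c else 0 := by
    intro j; simp [ev]
  rw [Finset.sum_congr rfl (fun j _ => this j)]
  simp [Finset.sum_ite_eq Finset.univ i]

lemma sum_ev_coord_false {m : ℕ} (c : ℝ) (i : Fin m) :
    (∑ j : Fin m, if ev j i = false then c else 0) = m * c - c := by
  have : ∀ j : Fin m, (if ev j i = false then c else 0)
      = c - (if ev j i = true then c else 0) := by
    intro j; by_cases h : ev j i = true <;> simp [h]
  rw [Finset.sum_congr rfl (fun j _ => this j), Finset.sum_sub_distrib, sum_ev_coord]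
  simp [mul_comm]

/-! ### Generic facts about `condEnt` for `Bool`-valued first coordinate -/

lemma pair_term_zero {a b : ℝ} (h : a = 0 ∨ b = 0) :
    a * Real.log (a / (a + b)) + b * Real.log (b / (a + b)) = 0 := by
  rcases h with rfl | rfl
  · rcases eq_or_ne b 0 with rfl | hb
    · simp
    · simp [div_self hb]
  · rcases eq_or_ne a 0 with rfl | ha
    · simp
    · simp [div_self ha]

lemma condEnt_bool {m : ℕ} (π : Bool → (Fin m → Bool) → ℝ) :
    condEnt π = - ∑ y : Fin m → Bool,
      (π true y * Real.log (π true y / (π true y + π false y)) +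
       π false y * Real.log (π false y / (π true y + π false y))) := by
  unfold condEnt
  congr 1
  apply Finset.sum_congr rfl
  intro y _
  rw [Fintype.sum_bool, Fintype.sum_bool]

lemma term_nonpos {a s : ℝ} (ha : 0 ≤ a) (has : a ≤ s) : a * Real.log (a / s) ≤ 0 := by
  rcases eq_or_lt_of_le ha with rfl | ha'
  · simp
  · apply mul_nonpos_of_nonneg_of_nonpos ha
    apply Real.log_nonpos
    · exact le_of_lt (div_pos ha' (by linarith))
    · rw [div_le_one (by linarith)]; exact has

lemma condEnt_nonneg {α β : Type*} [Fintype α] [Fintype β] (π : α → β → ℝ)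
    (h : ∀ x y, 0 ≤ π x y) : 0 ≤ condEnt π := by
  unfold condEnt
  rw [neg_nonneg]
  apply Finset.sum_nonpos
  intro y _
  apply Finset.sum_nonpos
  intro x _
  exact term_nonpos (h x y) (Finset.single_le_sum (fun x' _ => h x' y) (Finset.mem_univ x))

lemma neg_pair_eq (A B : ℝ) (h : 0 < A + B) :
    -(A * Real.log (A/(A+B)) + B * Real.log (B/(A+B))) = (A+B) * binEnt (A/(A+B)) := by
  have h1 : 1 - A/(A+B) = B/(A+B) := by field_simp; ring
  rw [binEnt, h1, mul_neg, neg_inj]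
  field_simp

/-! ### The two explicit optimal couplings -/

def cp0 (m : ℕ) (p q : ℝ) : Bool → (Fin m → Bool) → ℝ := fun x y =>
  if x then ∑ i : Fin m, (if y = ev i then p / m else 0)
  else (if y = ov m then q - p / m else 0) + (if y = zv m then 1 - p - (q - p / m) else 0)

lemma cp0_coupling {m : ℕ} (hm : 2 ≤ m) {p q : ℝ} (hp0 : 0 ≤ p) (hp : p ≤ 1/2)
    (hq0 : 0 ≤ q) (hq : q ≤ 1/2) (hpq : p ≤ m * q) :
    IsCouplingList (cp0 m p q) (Ber p) (fun _ : Fin m => Ber q) := by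
  have hm0 : (0:ℝ) < m := by exact_mod_cast (by omega : 0 < m)
  have h1 : 0 ≤ p / m := by positivity
  have h2 : 0 ≤ q - p / m := by
    rw [sub_nonneg, div_le_iff₀ hm0]; linarith [mul_comm q (m:ℝ)]
  have h3 : 0 ≤ 1 - p - (q - p / m) := by linarith
  have hmm : (m : ℝ) * (p / m) = p := by field_simp
  have hite : ∀ P : Prop, ∀ _ : Decidable P, ∀ c : ℝ, 0 ≤ c → 0 ≤ (if P then c else 0) := by
    intro P _ c hc; split <;> simp [hc]
  refine ⟨?_, ?_, ?_⟩
  · intro x y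
    cases x
    · simp only [cp0, if_false, Bool.false_eq_true]
      exact add_nonneg (hite _ _ _ h2) (hite _ _ _ h3)
    · simp only [cp0, if_true]
      exact Finset.sum_nonneg fun i _ => hite _ _ _ h1
  · intro x
    cases x
    · refine (sum_univ_ext (i2 := Pi.instFintype) _).trans ?_
      show (∑ y : Fin m → Bool, cp0 m p q false y) = Ber p false
      simp only [cp0, if_false, Bool.false_eq_true, Ber]
      rw [Finset.sum_add_distrib, sum_delta, sum_delta]
      ring
    · refine (sum_univ_ext (i2 := Pi.instFintype) _).trans ?_
      show (∑ y : Fin m → Bool, cp0 m p q true y) = Ber p true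
      simp only [cp0, if_true, Ber]
      rw [Finset.sum_comm]
      rw [Finset.sum_congr rfl (fun i (_ : i ∈ Finset.univ) => sum_delta (ev i) (p/m))]
      simp [hmm]
  · intro i b
    refine ymarg_bridge _ (fun x y => if y i = b then cp0 m p q x y else 0) _
      (fun x y => ite_ext _ _) ?_
    show (∑ x : Bool, ∑ y : Fin m → Bool, if y i = b then cp0 m p q x y else 0) = Ber q b
    rw [Fintype.sum_bool]
    have hsplit : ∀ y : Fin m → Bool,
        (if y i = b then cp0 m p q true y else 0)
          = ∑ j : Fin m, (if y i = b then (if y = ev j then p/m else 0) else 0) := by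
      intro y
      simp only [cp0, if_true]
      split <;> simp
    rw [Finset.sum_congr rfl (fun y _ => hsplit y), Finset.sum_comm,
      Finset.sum_congr rfl (fun j (_ : j ∈ Finset.univ) => sum_delta_coord (ev j) (p/m) i b)]
    have hsf : ∀ y : Fin m → Bool,
        (if y i = b then cp0 m p q false y else 0)
          = (if y i = b then (if y = ov m then q - p/m else 0) else 0)
            + (if y i = b then (if y = zv m then 1 - p - (q - p/m) else 0) else 0) := by
      intro y
      simp only [cp0, if_false, Bool.false_eq_true]
      split <;> simp
    rw [Finset.sum_congr rfl (fun y _ => hsf y), Finset.sum_add_distrib,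
      sum_delta_coord, sum_delta_coord]
    cases b
    · rw [sum_ev_coord_false]
      simp only [ov, zv, Ber, if_true, if_false, Bool.true_eq_false, Bool.false_eq_true]
      simp [hmm]
      ring
    · rw [sum_ev_coord]
      simp [ov, zv, Ber]

lemma cp0_condEnt {m : ℕ} (hm : 2 ≤ m) (p q : ℝ) : condEnt (cp0 m p q) = 0 := by
  rw [condEnt_bool, neg_eq_zero]
  apply Finset.sum_eq_zero
  intro y _
  apply pair_term_zero
  by_cases hy : ∃ i : Fin m, y = ev i
  · obtain ⟨i, rfl⟩ := hy
    right
    simp only [cp0, if_false, Bool.false_eq_true]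
    rw [if_neg (fun h => ov_ne_ev hm i h.symm), if_neg (ev_ne_zv i)]
    ring
  · left
    simp only [cp0, if_true]
    exact Finset.sum_eq_zero fun j _ => if_neg (fun h => hy ⟨j, h⟩)

def cp1 (m : ℕ) (p q : ℝ) : Bool → (Fin m → Bool) → ℝ := fun x y =>
  if x then (∑ i : Fin m, if y = ev i then q else 0) + (if y = zv m then p - m * q else 0)
  else (if y = zv m then 1 - p else 0)

lemma cp1_coupling {m : ℕ} {p q : ℝ} (hq0 : 0 ≤ q) (hp : p ≤ 1)
    (hpq : m * q ≤ p) :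
    IsCouplingList (cp1 m p q) (Ber p) (fun _ : Fin m => Ber q) := by
  have hite : ∀ P : Prop, ∀ _ : Decidable P, ∀ c : ℝ, 0 ≤ c → 0 ≤ (if P then c else 0) := by
    intro P _ c hc; split <;> simp [hc]
  refine ⟨?_, ?_, ?_⟩
  · intro x y
    cases x
    · exact hite _ _ _ (by linarith)
    · simp only [cp1, if_true]
      apply add_nonneg
      · exact Finset.sum_nonneg fun i _ => hite _ _ _ hq0
      · exact hite _ _ _ (by linarith)
  · intro x
    cases x
    · refine (sum_univ_ext (i2 := Pi.instFintype) _).trans ?_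
      show (∑ y : Fin m → Bool, cp1 m p q false y) = Ber p false
      simp only [cp1, if_false, Bool.false_eq_true, Ber]
      rw [sum_delta]
    · refine (sum_univ_ext (i2 := Pi.instFintype) _).trans ?_
      show (∑ y : Fin m → Bool, cp1 m p q true y) = Ber p true
      simp only [cp1, if_true, Ber]
      rw [Finset.sum_add_distrib, sum_delta, Finset.sum_comm,
        Finset.sum_congr rfl (fun i (_ : i ∈ Finset.univ) => sum_delta (ev i) q)]
      simp
  · intro i b
    refine ymarg_bridge _ (fun x y => if y i = b then cp1 m p q x y else 0) _
      (fun x y => ite_ext _ _) ?_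
    show (∑ x : Bool, ∑ y : Fin m → Bool, if y i = b then cp1 m p q x y else 0) = Ber q b
    rw [Fintype.sum_bool]
    have hsplit : ∀ y : Fin m → Bool,
        (if y i = b then cp1 m p q true y else 0)
          = (∑ j : Fin m, (if y i = b then (if y = ev j then q else 0) else 0))
            + (if y i = b then (if y = zv m then p - m * q else 0) else 0) := by
      intro y
      simp only [cp1, if_true]
      split <;> simp
    rw [Finset.sum_congr rfl (fun y _ => hsplit y), Finset.sum_add_distrib, Finset.sum_comm,
      Finset.sum_congr rfl (fun j (_ : j ∈ Finset.univ) => sum_delta_coord (ev j) q i b),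
      sum_delta_coord]
    have hsf : ∀ y : Fin m → Bool,
        (if y i = b then cp1 m p q false y else 0)
          = (if y i = b then (if y = zv m then 1 - p else 0) else 0) := by
      intro y; simp only [cp1, if_false, Bool.false_eq_true]
    rw [Finset.sum_congr rfl (fun y _ => hsf y), sum_delta_coord]
    cases b
    · rw [sum_ev_coord_false]
      simp [zv, Ber]
    · rw [sum_ev_coord]
      simp [zv, Ber]

lemma cp1_condEnt {m : ℕ} (hm : 2 ≤ m) {p q : ℝ} (hq0 : 0 ≤ q) (hp : p ≤ 1/2)
    (hqp : m * q < p) :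
    condEnt (cp1 m p q) = (1 - m * q) * binEnt ((p - m * q) / (1 - m * q)) := by
  have hzv : cp1 m p q true (zv m) = p - m * q := by
    simp only [cp1, if_true, if_pos rfl]
    rw [Finset.sum_eq_zero (fun j _ => if_neg (fun h => ev_ne_zv j h.symm))]
    ring
  have hzf : cp1 m p q false (zv m) = 1 - p := by
    simp [cp1]
  rw [condEnt_bool]
  rw [Finset.sum_eq_single_of_mem (zv m) (Finset.mem_univ _) ?side]
  case side =>
    intro y _ hy
    apply pair_term_zero
    right
    simp only [cp1, if_false, Bool.false_eq_true]
    rw [if_neg hy]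
  rw [hzv, hzf]
  have hpos : (0:ℝ) < (p - m * q) + (1 - p) := by linarith
  have h2 := neg_pair_eq (p - m * q) (1 - p) hpos
  rw [show (p - (m:ℝ) * q) + (1 - p) = 1 - m * q by ring] at h2
  rw [← h2]
  ring_nf

/-! ### Lower bound -/

lemma ymarg_bridge2 {m : ℕ} {i1 i2 : Fintype ((i : Fin m) → (fun _ : Fin m => Bool) i)}
    (f g : Bool → ((i : Fin m) → (fun _ : Fin m => Bool) i) → ℝ)
    (hfg : ∀ x y, f x y = g x y) :
    (∑ x : Bool, (@Finset.univ _ i1).sum (f x)) = (∑ x : Bool, (@Finset.univ _ i2).sum (g x)) := by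
  obtain rfl : i1 = i2 := Subsingleton.elim _ _
  exact Finset.sum_congr rfl fun x _ => Finset.sum_congr rfl fun y _ => hfg x y

lemma lower_bound {m : ℕ} {p q : ℝ} (hp : p ≤ 1/2) (hq0 : 0 ≤ q) (hqp : (m:ℝ) * q < p)
    (π : Bool → (Fin m → Bool) → ℝ)
    (hcoup : IsCouplingList π (Ber p) (fun _ : Fin m => Ber q)) :
    (1 - (m:ℝ)*q) * binEnt ((p - (m:ℝ)*q)/(1 - (m:ℝ)*q)) ≤ condEnt π := by
  obtain ⟨hnn, hX0, hY0⟩ := hcoup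
  have hmq0 : 0 ≤ (m:ℝ) * q := by positivity
  have hX : ∀ x, (∑ y : Fin m → Bool, π x y) = Ber p x := fun x =>
    (sum_univ_ext (i1 := Pi.instFintype) _).trans (hX0 x)
  have hY : ∀ i b, (∑ x : Bool, ∑ y : Fin m → Bool, if y i = b then π x y else 0) = Ber q b :=
    fun i b => (ymarg_bridge2 _ _ (fun x y => ite_ext _ _)).trans (hY0 i b)
  have hXt : (∑ y : Fin m → Bool, π true y) = p := by rw [hX true]; simp [Ber]
  have hXf : (∑ y : Fin m → Bool, π false y) = 1 - p := by rw [hX false]; simp [Ber]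
  -- total mass 1
  have hg1 : ∑ y : Fin m → Bool, (π true y + π false y) = 1 := by
    rw [Finset.sum_add_distrib, hXt, hXf]; ring
  -- union bound on the mass outside the all-zero column
  have hrest : ∑ y ∈ Finset.univ.erase (zv m), (π true y + π false y) ≤ (m:ℝ) * q := by
    have step1 : ∀ y ∈ Finset.univ.erase (zv m), (π true y + π false y)
        ≤ ∑ i : Fin m, (if y i = true then (π true y + π false y) else 0) := by
      intro y hy
      have hy' : y ≠ zv m := Finset.ne_of_mem_erase hy
      have hex : ∃ i, y i = true := by
        by_contra hcon
        push_neg at hcon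
        refine hy' (funext fun i => ?_)
        have := hcon i
        revert this
        cases y i <;> simp [zv]
      obtain ⟨i0, hi0⟩ := hex
      calc π true y + π false y
          = (if y i0 = true then (π true y + π false y) else 0) := by rw [if_pos hi0]
        _ ≤ ∑ i : Fin m, (if y i = true then (π true y + π false y) else 0) :=
            Finset.single_le_sum
              (f := fun i : Fin m => if y i = true then (π true y + π false y) else 0)
              (fun i _ => by
                split
                · exact add_nonneg (hnn true y) (hnn false y)
                · exact le_refl 0) (Finset.mem_univ i0)
    calc ∑ y ∈ Finset.univ.erase (zv m), (π true y + π false y)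
        ≤ ∑ y ∈ Finset.univ.erase (zv m),
            ∑ i : Fin m, (if y i = true then (π true y + π false y) else 0) :=
          Finset.sum_le_sum step1
      _ ≤ ∑ y : Fin m → Bool, ∑ i : Fin m, (if y i = true then (π true y + π false y) else 0) :=
          Finset.sum_le_sum_of_subset_of_nonneg (Finset.erase_subset _ _)
            (fun y _ _ => Finset.sum_nonneg fun i _ => by
              split
              · exact add_nonneg (hnn true y) (hnn false y)
              · exact le_refl 0)
      _ = ∑ i : Fin m, ∑ y : Fin m → Bool, (if y i = true then (π true y + π false y) else 0) :=
          Finset.sum_comm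
      _ = ∑ _i : Fin m, q := by
          refine Finset.sum_congr rfl fun i _ => ?_
          have h := hY i true
          rw [Fintype.sum_bool] at h
          rw [show (fun y : Fin m → Bool => if y i = true then (π true y + π false y) else 0)
              = fun y => (if y i = true then π true y else 0)
                + (if y i = true then π false y else 0) from funext fun y => by split <;> simp]
          rw [Finset.sum_add_distrib]
          simpa [Ber] using h
      _ = (m:ℝ) * q := by simp [mul_comm]
  have hsplit : (π true (zv m) + π false (zv m))
      + ∑ y ∈ Finset.univ.erase (zv m), (π true y + π false y) = 1 :=
    (Finset.add_sum_erase _ (fun y => π true y + π false y)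
      (Finset.mem_univ (zv m))).trans hg1
  have hsplitT : π true (zv m) + ∑ y ∈ Finset.univ.erase (zv m), π true y = p :=
    (Finset.add_sum_erase _ (fun y => π true y) (Finset.mem_univ (zv m))).trans hXt
  have hrestT : ∑ y ∈ Finset.univ.erase (zv m), π true y
      ≤ ∑ y ∈ Finset.univ.erase (zv m), (π true y + π false y) :=
    Finset.sum_le_sum fun y _ => by linarith [hnn false y]
  have hrestT0 : 0 ≤ ∑ y ∈ Finset.univ.erase (zv m), π true y :=
    Finset.sum_nonneg fun y _ => hnn true y
  have hnu : 1 - (m:ℝ)*q ≤ π true (zv m) + π false (zv m) := by linarith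
  have hA : p - (m:ℝ)*q ≤ π true (zv m) := by linarith
  have hAp : π true (zv m) ≤ p := by linarith
  have hB : p - (m:ℝ)*q ≤ π false (zv m) := by linarith
  have hnupos : 0 < π true (zv m) + π false (zv m) := by linarith
  -- condEnt is at least the contribution of the all-zero column
  have hcol : -(π true (zv m) * Real.log (π true (zv m) / (π true (zv m) + π false (zv m)))
      + π false (zv m) * Real.log (π false (zv m) / (π true (zv m) + π false (zv m))))
      ≤ condEnt π := by
    rw [condEnt_bool, ← Finset.sum_neg_distrib]
    refine Finset.single_le_sum (f := fun y =>
      -(π true y * Real.log (π true y / (π true y + π false y))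
        + π false y * Real.log (π false y / (π true y + π false y))))
      (fun y _ => ?_) (Finset.mem_univ (zv m))
    have h1 := term_nonpos (hnn true y) (le_add_of_nonneg_right (hnn false y))
    have h2 := term_nonpos (hnn false y) (le_add_of_nonneg_left (hnn true y))
    linarith
  rw [neg_pair_eq _ _ hnupos] at hcol
  refine le_trans ?_ hcol
  -- abbreviations
  set A := π true (zv m) with hAdef
  set B := π false (zv m) with hBdef
  set c := (p - (m:ℝ)*q)/(1 - (m:ℝ)*q) with hcdef
  have hden : (0:ℝ) < 1 - (m:ℝ)*q := by linarith
  have hc0 : 0 < c := div_pos (by linarith) hden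
  have hc2 : c ≤ 1/2 := by rw [hcdef, div_le_iff₀ hden]; linarith
  have hbc : 0 ≤ binEnt c / c := div_nonneg (binEnt_nonneg hc0.le (by linarith)) hc0.le
  have ht0 : 0 ≤ A/(A+B) := div_nonneg (hnn true _) hnupos.le
  have ht1 : A/(A+B) ≤ 1 := by rw [div_le_one hnupos]; linarith [hnn false (zv m)]
  have hch := binEnt_chord hc0 hc2 ht0 ht1
  have hchain := mul_le_mul_of_nonneg_left hch hnupos.le
  refine le_trans ?_ hchain
  have h1mA : 1 - A/(A+B) = B/(A+B) := by field_simp; ring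
  have hmin : (p - (m:ℝ)*q)/(A+B) ≤ min (A/(A+B)) (min (1 - A/(A+B)) c) := by
    refine le_min ?_ (le_min ?_ ?_)
    · gcongr
    · rw [h1mA]
      gcongr
    · calc (p - (m:ℝ)*q)/(A+B) ≤ (p - (m:ℝ)*q)/(1 - (m:ℝ)*q) :=
            div_le_div_of_nonneg_left (by linarith) hden hnu
        _ = c := by rw [hcdef]
  have e1 : (A+B) * ((p - (m:ℝ)*q)/(A+B)) = p - (m:ℝ)*q := by field_simp
  have e2 : p - (m:ℝ)*q = c * (1 - (m:ℝ)*q) := by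
    rw [hcdef]; exact (div_mul_cancel₀ _ hden.ne').symm
  have e3 : (binEnt c / c) * c = binEnt c := div_mul_cancel₀ _ hc0.ne'
  have heq : (1 - (m:ℝ)*q) * binEnt c
      = (A+B) * ((binEnt c / c) * ((p - (m:ℝ)*q)/(A+B))) := by
    calc (1 - (m:ℝ)*q) * binEnt c
        = (binEnt c / c) * (c * (1 - (m:ℝ)*q)) := by rw [← mul_assoc, e3, mul_comm]
      _ = (binEnt c / c) * (p - (m:ℝ)*q) := by rw [← e2]
      _ = (A+B) * ((binEnt c / c) * ((p - (m:ℝ)*q)/(A+B))) := by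
          rw [mul_comm (binEnt c / c) ((p - (m:ℝ)*q)/(A+B)), ← mul_assoc, e1, mul_comm]
  rw [heq]
  exact mul_le_mul_of_nonneg_left (mul_le_mul_of_nonneg_left hmin hbc) hnupos.le

/-! ### Computing the infimum -/

lemma Hm_eq {m : ℕ} {p q v : ℝ}
    (π₀ : Bool → (Fin m → Bool) → ℝ)
    (hc : IsCouplingList π₀ (Ber p) (fun _ : Fin m => Ber q))
    (he : condEnt π₀ = v)
    (hlb : ∀ π : Bool → (Fin m → Bool) → ℝ,
      IsCouplingList π (Ber p) (fun _ : Fin m => Ber q) → v ≤ condEnt π) :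
    Hm m (Ber p) (Ber q) = v := by
  unfold Hm Hlist
  apply le_antisymm
  · apply csInf_le
    · refine ⟨v, ?_⟩
      rintro h' ⟨π, hπ, rfl⟩
      exact (hlb π hπ).trans (le_of_eq (condEnt_ext (i1 := Pi.instFintype) π))
    · exact ⟨π₀, hc, (condEnt_ext (i2 := Pi.instFintype) π₀).trans he⟩
  · apply le_csInf
    · exact ⟨_, π₀, hc, rfl⟩
    · rintro h' ⟨π, hπ, rfl⟩
      exact (hlb π hπ).trans (le_of_eq (condEnt_ext (i1 := Pi.instFintype) π))

/-! ### Symmetries -/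

lemma flipX_mem {m : ℕ} {i1 : Fintype ((i : Fin m) → (fun _ : Fin m => Bool) i)} {p q h : ℝ}
    (hmem : ∃ π : Bool → ((i : Fin m) → (fun _ : Fin m => Bool) i) → ℝ,
      IsCouplingList π (Ber p) (fun _ => Ber q) ∧ @condEnt Bool _ _ i1 π = h) :
    ∃ π : Bool → ((i : Fin m) → (fun _ : Fin m => Bool) i) → ℝ,
      IsCouplingList π (Ber (1 - p)) (fun _ => Ber q) ∧ @condEnt Bool _ _ i1 π = h := by
  obtain ⟨π, ⟨hnn, hX0, hY0⟩, rfl⟩ := hmem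
  have hX : ∀ x, (∑ y : Fin m → Bool, π x y) = Ber p x := fun x =>
    (sum_univ_ext _).trans (hX0 x)
  have hY : ∀ (i : Fin m) (b : Bool),
      (∑ x : Bool, ∑ y : Fin m → Bool, if y i = b then π x y else 0) = Ber q b :=
    fun i b => (ymarg_bridge2 _ _ (fun x y => ite_ext _ _)).trans (hY0 i b)
  refine ⟨fun x y => π (!x) y, ⟨fun x y => hnn (!x) y, ?_, ?_⟩, ?_⟩
  · intro x
    refine (sum_univ_ext (i2 := i1) _).trans ?_
    refine (hX (!x)).trans ?_
    cases x <;> simp [Ber] <;> ring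
  · intro i b
    refine (ymarg_bridge2 (i2 := i1) _ (fun x y => if y i = b then π (!x) y else 0)
      (fun x y => ite_ext _ _)).trans ?_
    show (∑ x : Bool, ∑ y : Fin m → Bool, if y i = b then π (!x) y else 0) = Ber q b
    have hh := hY i b
    rw [Fintype.sum_bool] at hh
    rw [Fintype.sum_bool]
    exact (add_comm _ _).trans hh
  · unfold condEnt
    congr 1
    refine Finset.sum_congr rfl fun y _ => ?_
    simp only [Fintype.sum_bool, Bool.not_true, Bool.not_false]
    rw [add_comm (π false y) (π true y)]
    ring

lemma flipY_mem {m : ℕ} {i1 : Fintype ((i : Fin m) → (fun _ : Fin m => Bool) i)} {p q h : ℝ}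
    (hmem : ∃ π : Bool → ((i : Fin m) → (fun _ : Fin m => Bool) i) → ℝ,
      IsCouplingList π (Ber p) (fun _ => Ber q) ∧ @condEnt Bool _ _ i1 π = h) :
    ∃ π : Bool → ((i : Fin m) → (fun _ : Fin m => Bool) i) → ℝ,
      IsCouplingList π (Ber p) (fun _ => Ber (1 - q)) ∧ @condEnt Bool _ _ i1 π = h := by
  obtain ⟨π, ⟨hnn, hX0, hY0⟩, rfl⟩ := hmem
  have hX : ∀ x, (∑ y : Fin m → Bool, π x y) = Ber p x := fun x =>
    (sum_univ_ext _).trans (hX0 x)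
  have hY : ∀ (i : Fin m) (b : Bool),
      (∑ x : Bool, ∑ y : Fin m → Bool, if y i = b then π x y else 0) = Ber q b :=
    fun i b => (ymarg_bridge2 _ _ (fun x y => ite_ext _ _)).trans (hY0 i b)
  have hinv : Function.Involutive (fun (y : Fin m → Bool) i => !(y i)) :=
    fun y => funext fun i => Bool.not_not (y i)
  have hbij := hinv.bijective
  refine ⟨fun x y => π x (fun i => !(y i)), ⟨fun x y => hnn x _, ?_, ?_⟩, ?_⟩
  · intro x
    refine (sum_univ_ext (i2 := i1) _).trans ?_
    refine Eq.trans ?_ (hX x)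
    exact Fintype.sum_bijective _ hbij (fun y : Fin m → Bool => π x (fun i => !(y i)))
      (fun y => π x y) (fun y => rfl)
  · intro i b
    have hBer : Ber (1 - q) b = Ber q (!b) := by cases b <;> simp [Ber] <;> ring
    refine (ymarg_bridge2 (i2 := i1) _
      (fun x y => if y i = b then π x (fun j => !(y j)) else 0)
      (fun x y => ite_ext _ _)).trans ?_
    show (∑ x : Bool, ∑ y : Fin m → Bool, if y i = b then π x (fun j => !(y j)) else 0)
      = Ber (1 - q) b
    rw [hBer, ← hY i (!b)]
    refine Finset.sum_congr rfl fun x _ => ?_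
    refine Fintype.sum_bijective _ hbij
      (fun y : Fin m → Bool => if y i = b then π x (fun j => !(y j)) else 0)
      (fun y : Fin m → Bool => if y i = !b then π x y else 0) (fun y => ?_)
    refine if_congr ?_ rfl rfl
    show (y i = b) ↔ (Bool.not (y i) = Bool.not b)
    cases y i <;> cases b <;> simp
  · unfold condEnt
    congr 1
    exact @Fintype.sum_bijective _ _ _ i1 i1 _ _ hbij
      (fun y => ∑ x : Bool, π x (fun i => !(y i)) *
        Real.log (π x (fun i => !(y i)) / ∑ x' : Bool, π x' (fun i => !(y i))))
      (fun y => ∑ x : Bool, π x y * Real.log (π x y / ∑ x' : Bool, π x' y))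
      (fun y => rfl)

lemma Hm_flipX (m : ℕ) (p q : ℝ) : Hm m (Ber p) (Ber q) = Hm m (Ber (1 - p)) (Ber q) := by
  unfold Hm Hlist
  congr 1
  ext h
  constructor
  · exact flipX_mem
  · intro hh
    have := flipX_mem (p := 1 - p) (q := q) hh
    rwa [sub_sub_cancel] at this

lemma Hm_flipY (m : ℕ) (p q : ℝ) : Hm m (Ber p) (Ber q) = Hm m (Ber p) (Ber (1 - q)) := by
  unfold Hm Hlist
  congr 1
  ext h
  constructor
  · exact flipY_mem
  · intro hh
    have := flipY_mem (p := p) (q := 1 - q) hh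
    rwa [sub_sub_cancel] at this

/-! ### Main theorem -/

lemma key {m : ℕ} (hm : 2 ≤ m) {p q : ℝ} (hp0 : 0 ≤ p) (hp : p ≤ 1/2)
    (hq0 : 0 ≤ q) (hq : q ≤ 1/2) :
    (p ≤ (m:ℝ)*q → Hm m (Ber p) (Ber q) = 0) ∧
      ((m:ℝ)*q < p → Hm m (Ber p) (Ber q) = (1 - (m:ℝ)*q) * binEnt ((p - (m:ℝ)*q)/(1 - (m:ℝ)*q))) := by
  constructor
  · intro hpq
    exact Hm_eq (cp0 m p q) (cp0_coupling hm hp0 hp hq0 hq hpq) (cp0_condEnt hm p q)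
      (fun π hπ => condEnt_nonneg π hπ.1)
  · intro hqp
    exact Hm_eq (cp1 m p q) (cp1_coupling hq0 (by linarith) hqp.le)
      (cp1_condEnt hm hq0 hp hqp) (fun π hπ => lower_bound hp hq0 hqp π hπ)

/-- For `p, q ∈ [0,1]`, `r = min{p, 1−p}`, `s = min{q, 1−q}`, and `m ≥ 2`:
`H_m(Ber(p)‖Ber(q)) = 0` if `r ≤ m·s`, and
`H_m(Ber(p)‖Ber(q)) = (1 − m·s)·h_b((r − m·s)/(1 − m·s))` if `r > m·s`. -/
theorem bernoulli_multi_sample (p q : ℝ) (hp0 : 0 ≤ p) (hp1 : p ≤ 1)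
    (hq0 : 0 ≤ q) (hq1 : q ≤ 1) (m : ℕ) (hm : 2 ≤ m) :
    (min p (1 - p) ≤ (m : ℝ) * min q (1 - q) → Hm m (Ber p) (Ber q) = 0) ∧
      ((m : ℝ) * min q (1 - q) < min p (1 - p) →
        Hm m (Ber p) (Ber q) =
          (1 - (m : ℝ) * min q (1 - q)) *
            binEnt ((min p (1 - p) - (m : ℝ) * min q (1 - q)) /
              (1 - (m : ℝ) * min q (1 - q)))) := by
  have hr0 : 0 ≤ min p (1 - p) := le_min hp0 (by linarith)
  have hs0 : 0 ≤ min q (1 - q) := le_min hq0 (by linarith)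
  have hr2 : min p (1 - p) ≤ 1/2 := by
    rcases le_total p (1 - p) with h | h
    · rw [min_eq_left h]; linarith
    · rw [min_eq_right h]; linarith
  have hs2 : min q (1 - q) ≤ 1/2 := by
    rcases le_total q (1 - q) with h | h
    · rw [min_eq_left h]; linarith
    · rw [min_eq_right h]; linarith
  have hEq : Hm m (Ber p) (Ber q) = Hm m (Ber (min p (1 - p))) (Ber (min q (1 - q))) := by
    rcases le_total p (1 - p) with h | h <;> rcases le_total q (1 - q) with h' | h'
    · rw [min_eq_left h, min_eq_left h']
    · rw [min_eq_left h, min_eq_right h', ← Hm_flipY]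
    · rw [min_eq_right h, min_eq_left h', ← Hm_flipX]
    · rw [min_eq_right h, min_eq_right h', ← Hm_flipX, ← Hm_flipY]
  obtain ⟨k1, k2⟩ := key hm hr0 hr2 hs0 hs2
  exact ⟨fun h => by rw [hEq]; exact k1 h, fun h => by rw [hEq]; exact k2 h⟩

end
end

section
/- Let X be a finite alphabet with |X| = r ≥ 2, and let P and Q be probability distributions on X. Then for every integer m ≥ 1, H_m(P‖Q) ≤ ζ_m · log r, where ζ_m := min{1, (r−1)·‖Q‖_∞^m} and ‖Q‖_∞ := max_{x∈X} Q(x). -/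
open scoped Classical BigOperators

noncomputable section

lemma MEC.step_ident (a b c d : ℝ) (hab : a ≤ b) (hcd : c ≤ d) :
    max 0 (min b d - max a c) = max a (min b d) - max a (min b c) := by
  simp only [max_def, min_def]
  split_ifs <;> linarith

lemma MEC.tele (a b : ℝ) (hab : a ≤ b) (c : ℕ → ℝ) (hc : Monotone c) (N : ℕ) :
    ∑ j ∈ Finset.range N, max 0 (min b (c (j+1)) - max a (c j))
      = max a (min b (c N)) - max a (min b (c 0)) := by
  induction N with
  | zero => simp
  | succ n ih =>
      rw [Finset.sum_range_succ, ih, MEC.step_ident a b _ _ hab (hc (Nat.le_succ n))]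
      ring

noncomputable def MEC.cum {δ : Type*} [Fintype δ] {n : ℕ} (e : δ ≃ Fin n) (W : δ → ℝ) : ℕ → ℝ :=
  fun k => ∑ x, if (e x : ℕ) < k then W x else 0

namespace MEC

lemma cum_zero {δ : Type*} [Fintype δ] {n : ℕ} (e : δ ≃ Fin n) (W : δ → ℝ) :
    cum e W 0 = 0 := by simp [cum]

lemma cum_top {δ : Type*} [Fintype δ] {n : ℕ} (e : δ ≃ Fin n) (W : δ → ℝ) (k : ℕ)
    (hk : n ≤ k) : cum e W k = ∑ x, W x := by
  unfold cum
  apply Finset.sum_congr rfl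
  intro x _
  rw [if_pos (lt_of_lt_of_le (e x).isLt hk)]

lemma cum_mono {δ : Type*} [Fintype δ] {n : ℕ} (e : δ ≃ Fin n) (W : δ → ℝ)
    (hW : ∀ x, 0 ≤ W x) : Monotone (cum e W) := by
  intro k l hkl
  apply Finset.sum_le_sum
  intro x _
  split_ifs with h1 h2 h2
  · exact le_refl _
  · exact absurd (lt_of_lt_of_le h1 hkl) h2
  · exact hW x
  · exact le_refl _

lemma cum_nonneg {δ : Type*} [Fintype δ] {n : ℕ} (e : δ ≃ Fin n) (W : δ → ℝ)
    (hW : ∀ x, 0 ≤ W x) (k : ℕ) : 0 ≤ cum e W k := by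
  rw [← cum_zero e W]; exact cum_mono e W hW (Nat.zero_le k)

lemma cum_le_one {δ : Type*} [Fintype δ] {n : ℕ} (e : δ ≃ Fin n) (W : δ → ℝ)
    (hW : ∀ x, 0 ≤ W x) (hsum : ∑ x, W x = 1) (k : ℕ) : cum e W k ≤ 1 := by
  rcases le_total n k with h | h
  · rw [cum_top e W k h, hsum]
  · rw [← hsum, ← cum_top e W n le_rfl]; exact cum_mono e W hW h

lemma cum_step {δ : Type*} [Fintype δ] {n : ℕ} (e : δ ≃ Fin n) (W : δ → ℝ) (x : δ) :
    cum e W ((e x : ℕ) + 1) = cum e W (e x : ℕ) + W x := by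
  unfold cum
  have : ∀ x' : δ, (if (e x' : ℕ) < (e x : ℕ) + 1 then W x' else 0)
      = (if (e x' : ℕ) < (e x : ℕ) then W x' else 0) + (if x' = x then W x' else 0) := by
    intro x'
    by_cases h : x' = x
    · subst h; simp
    · have hne : (e x' : ℕ) ≠ (e x : ℕ) := fun hh =>
        h (e.injective (Fin.ext hh))
      by_cases h2 : (e x' : ℕ) < (e x : ℕ)
      · rw [if_pos (Nat.lt_succ_of_lt h2), if_pos h2, if_neg h]; ring
      · rw [if_neg, if_neg h2, if_neg h]
        · ring
        · intro h3
          exact hne (Nat.le_antisymm (Nat.lt_succ_iff.mp h3) (Nat.le_of_not_lt h2))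
  rw [Finset.sum_congr rfl (fun x' _ => this x'), Finset.sum_add_distrib,
    Finset.sum_ite_eq' Finset.univ x W, if_pos (Finset.mem_univ x)]

lemma ent_term_le (w S : ℝ) (r : ℕ) (hw : 0 ≤ w) (hwS : w ≤ S) (hr : 0 < r) :
    -(w * Real.log (w / S)) ≤ S / r - w + w * Real.log r := by
  rcases eq_or_lt_of_le hw with h0 | hwpos
  · have : (0:ℝ) ≤ S / r := div_nonneg (le_trans hw hwS) (Nat.cast_nonneg r)
    simp only [← h0, zero_mul, neg_zero, sub_zero, add_zero]
    linarith
  · have hS : 0 < S := lt_of_lt_of_le hwpos hwS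
    have hrR : (0 : ℝ) < r := Nat.cast_pos.mpr hr
    have h1 : Real.log (S / (w * r)) ≤ S / (w * r) - 1 :=
      Real.log_le_sub_one_of_pos (by positivity)
    have h2 : Real.log (w / S) = Real.log w - Real.log S :=
      Real.log_div (ne_of_gt hwpos) (ne_of_gt hS)
    have h3 : Real.log (S / (w * r)) = Real.log S - Real.log w - Real.log r := by
      rw [Real.log_div (ne_of_gt hS) (by positivity), Real.log_mul (ne_of_gt hwpos) (ne_of_gt hrR)]
      ring
    have h4 : w * (S / (w * r)) = S / r := by
      field_simp
    nlinarith [mul_le_mul_of_nonneg_left h1 hw]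

lemma ent_fiber_le {α : Type*} [Fintype α] (r : ℕ) (hcard : Fintype.card α = r)
    (hr : 0 < r) (w : α → ℝ) (hw : ∀ x, 0 ≤ w x) :
    -(∑ x, w x * Real.log (w x / ∑ x', w x')) ≤ (∑ x, w x) * Real.log r := by
  set S := ∑ x', w x' with hSdef
  have hwS : ∀ x, w x ≤ S := fun x =>
    Finset.single_le_sum (fun x _ => hw x) (Finset.mem_univ x)
  have hrR : (0 : ℝ) < r := Nat.cast_pos.mpr hr
  calc -(∑ x, w x * Real.log (w x / S)) = ∑ x, -(w x * Real.log (w x / S)) := by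
        rw [← Finset.sum_neg_distrib]
    _ ≤ ∑ x : α, (S / r - w x + w x * Real.log r) :=
        Finset.sum_le_sum (fun x _ => ent_term_le (w x) S r (hw x) (hwS x) hr)
    _ = (Fintype.card α) * (S / r) - S + S * Real.log r := by
        rw [Finset.sum_add_distrib, Finset.sum_sub_distrib, Finset.sum_const,
          ← Finset.sum_mul, ← hSdef, Finset.card_univ, nsmul_eq_mul]
    _ = S * Real.log r := by
        rw [hcard]
        field_simp
        ring

lemma ent_fiber_zero {α : Type*} [Fintype α] (w : α → ℝ)
    (huniq : ∀ x x', w x ≠ 0 → w x' ≠ 0 → x = x') :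
    ∑ x, w x * Real.log (w x / ∑ x', w x') = 0 := by
  apply Finset.sum_eq_zero
  intro x _
  by_cases hx : w x = 0
  · rw [hx, zero_mul]
  · have hsum : ∑ x', w x' = w x := by
      apply Finset.sum_eq_single
      · intro x' _ hne
        by_contra h
        exact hne (huniq x' x h hx)
      · intro h; exact absurd (Finset.mem_univ x) h
    rw [hsum, div_self hx, Real.log_one, mul_zero]

lemma prod_marginal {α : Type*} [Fintype α] (m : ℕ) (Q : α → ℝ) (hQ1 : ∑ x, Q x = 1)
    (i : Fin m) (b : α) :
    (∑ y : Fin m → α, if y i = b then ∏ j, Q (y j) else 0) = Q b := by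
  have key : ∀ y : Fin m → α,
      (if y i = b then ∏ j, Q (y j) else 0)
        = ∏ j, (fun (j : Fin m) (v : α) => if j = i then (if v = b then Q v else 0) else Q v) j (y j) := by
    intro y
    by_cases h : y i = b
    · rw [if_pos h]
      apply Finset.prod_congr rfl
      intro j _
      by_cases hj : j = i
      · subst hj; simp [h]
      · simp [hj]
    · rw [if_neg h]
      symm
      apply Finset.prod_eq_zero (Finset.mem_univ i)
      simp [h]
  have ps := Fintype.prod_sum (ι := Fin m) (κ := fun _ => α)
    (f := fun (j : Fin m) (v : α) => if j = i then (if v = b then Q v else 0) else Q v)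
  rw [Finset.sum_congr rfl (fun y _ => key y), ← ps]
  have : ∀ j : Fin m, (∑ v : α, (fun (j : Fin m) (v : α) => if j = i then (if v = b then Q v else 0) else Q v) j v)
      = if j = i then Q b else 1 := by
    intro j
    by_cases hj : j = i
    · simp [hj, Finset.sum_ite_eq' Finset.univ b Q]
    · simp [hj, hQ1]
  rw [Finset.prod_congr rfl (fun j _ => this j)]
  simp

lemma sum_inst {β M : Type*} [AddCommMonoid M] (i1 i2 : Fintype β) (f : β → M) :
    (∑ y ∈ (@Finset.univ β i1), f y) = ∑ y ∈ (@Finset.univ β i2), f y := by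
  cases Subsingleton.elim i1 i2; rfl

lemma condEnt_inst {α β : Type*} [Fintype α] (i1 i2 : Fintype β) (π : α → β → ℝ) :
    @condEnt α β _ i1 π = @condEnt α β _ i2 π := by
  cases Subsingleton.elim i1 i2; rfl

lemma condEnt_nonneg {α β : Type*} [Fintype α] [Fintype β] (π : α → β → ℝ)
    (hpos : ∀ x y, 0 ≤ π x y) : 0 ≤ condEnt π := by
  unfold condEnt
  rw [neg_nonneg]
  apply Finset.sum_nonpos
  intro y _
  apply Finset.sum_nonpos
  intro x _
  by_cases hx : π x y = 0
  · rw [hx, zero_mul]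
  · have hxpos : 0 < π x y := lt_of_le_of_ne (hpos x y) (Ne.symm hx)
    have hS : π x y ≤ ∑ x', π x' y :=
      Finset.single_le_sum (fun x' _ => hpos x' y) (Finset.mem_univ x)
    have hSpos : 0 < ∑ x', π x' y := lt_of_lt_of_le hxpos hS
    apply mul_nonpos_of_nonneg_of_nonpos (le_of_lt hxpos)
    apply Real.log_nonpos
    · positivity
    · rw [div_le_one hSpos]; exact hS

end MEC

/-- For a finite alphabet of size `r ≥ 2`, distributions `P, Q`, and `m ≥ 1`,
`H_m(P‖Q) ≤ ζ_m · log r` where `ζ_m = min{1, (r−1)·‖Q‖_∞^m}` and `‖Q‖_∞ = max_x Q(x)`. -/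
theorem homogeneous_exponential_decay {α : Type*} [Fintype α] (r : ℕ) (hr : 2 ≤ r)
    (hcard : Fintype.card α = r) (P Q : α → ℝ)
    (hP : IsProbDist P) (hQ : IsProbDist Q) (m : ℕ) (hm : 1 ≤ m) :
    Hm m P Q ≤ min 1 (((r : ℝ) - 1) * (⨆ x, Q x) ^ m) * Real.log r := by
  classical
  obtain ⟨hPpos, hPsum⟩ := hP
  obtain ⟨hQpos, hQsum⟩ := hQ
  have hr0 : 0 < r := lt_of_lt_of_le (by norm_num) hr
  have hrR1 : (1 : ℝ) ≤ r := by
    have : (1:ℕ) ≤ r := le_trans (by norm_num) hr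
    exact_mod_cast this
  have hlog : 0 ≤ Real.log r := Real.log_nonneg hrR1
  set e : α ≃ Fin r := Fintype.equivFinOfCardEq hcard with he
  set N := Fintype.card (Fin m → α) with hN
  set g : (Fin m → α) ≃ Fin N := Fintype.equivFin _ with hg
  set R : (Fin m → α) → ℝ := fun y => ∏ j, Q (y j) with hR
  have hRpos : ∀ y, 0 ≤ R y := fun y => Finset.prod_nonneg (fun j _ => hQpos (y j))
  have hRsum : ∑ y, R y = 1 := by
    rw [hR]
    have := (Fintype.prod_sum (ι := Fin m) (κ := fun _ => α) (f := fun _ v => Q v)).symm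
    rw [this, hQsum, Finset.prod_const, one_pow]
  set F := MEC.cum e P with hF
  set G := MEC.cum g R with hG
  have hFmono : Monotone F := MEC.cum_mono e P hPpos
  have hGmono : Monotone G := MEC.cum_mono g R hRpos
  have hFnn : ∀ k, 0 ≤ F k := MEC.cum_nonneg e P hPpos
  have hGnn : ∀ k, 0 ≤ G k := MEC.cum_nonneg g R hRpos
  have hFle1 : ∀ k, F k ≤ 1 := MEC.cum_le_one e P hPpos hPsum
  have hGle1 : ∀ k, G k ≤ 1 := MEC.cum_le_one g R hRpos hRsum
  have hF0 : F 0 = 0 := MEC.cum_zero e P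
  have hG0 : G 0 = 0 := MEC.cum_zero g R
  have hFtop : F r = 1 := by rw [hF, MEC.cum_top e P r le_rfl, hPsum]
  have hGtop : G N = 1 := by rw [hG, MEC.cum_top g R N le_rfl, hRsum]
  have hFstep : ∀ x, F ((e x : ℕ) + 1) = F (e x : ℕ) + P x := fun x => MEC.cum_step e P x
  have hGstep : ∀ y, G ((g y : ℕ) + 1) = G (g y : ℕ) + R y := fun y => MEC.cum_step g R y
  set π : α → (Fin m → α) → ℝ := fun x y =>
    max 0 (min (F ((e x : ℕ) + 1)) (G ((g y : ℕ) + 1)) - max (F (e x : ℕ)) (G (g y : ℕ))) with hπ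
  have hπpos : ∀ x y, 0 ≤ π x y := fun x y => le_max_left _ _
  -- marginal over y
  have hXmarg : ∀ x, ∑ y, π x y = P x := by
    intro x
    set a := F (e x : ℕ) with ha
    set b := F ((e x : ℕ) + 1) with hb
    have hab : a ≤ b := hFmono (Nat.le_succ _)
    have step1 : ∑ y, π x y
        = ∑ j : Fin N, max 0 (min b (G ((j : ℕ) + 1)) - max a (G (j : ℕ))) := by
      rw [← Equiv.sum_comp g (fun j : Fin N => max 0 (min b (G ((j : ℕ) + 1)) - max a (G (j : ℕ))))]
    rw [step1, Fin.sum_univ_eq_sum_range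
      (fun j => max 0 (min b (G (j + 1)) - max a (G j))) N,
      MEC.tele a b hab G hGmono N, hG0, hGtop]
    rw [min_eq_left (hFle1 _), max_eq_right hab, min_eq_right (hFnn _), max_eq_left (hFnn _)]
    simp only [ha, hb, hFstep x]
    ring
  -- marginal over x
  have hYmarg : ∀ y, ∑ x, π x y = R y := by
    intro y
    set c := G (g y : ℕ) with hc
    set d := G ((g y : ℕ) + 1) with hd
    have hcd : c ≤ d := hGmono (Nat.le_succ _)
    have step0 : ∀ x, π x y = max 0 (min d (F ((e x : ℕ) + 1)) - max c (F (e x : ℕ))) := by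
      intro x
      have h0 : π x y = max 0 (min (F ((e x : ℕ) + 1)) d - max (F (e x : ℕ)) c) := rfl
      rw [h0, min_comm _ d, max_comm _ c]
    have step1 : ∑ x, π x y
        = ∑ k : Fin r, max 0 (min d (F ((k : ℕ) + 1)) - max c (F (k : ℕ))) := by
      rw [Finset.sum_congr rfl (fun x _ => step0 x),
        ← Equiv.sum_comp e (fun k : Fin r => max 0 (min d (F ((k : ℕ) + 1)) - max c (F (k : ℕ))))]
    rw [step1, Fin.sum_univ_eq_sum_range
      (fun k => max 0 (min d (F (k + 1)) - max c (F k))) r,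
      MEC.tele c d hcd F hFmono r, hF0, hFtop]
    rw [min_eq_left (hGle1 _), max_eq_right hcd, min_eq_right (hGnn _), max_eq_left (hGnn _)]
    simp only [hc, hd, hGstep y]
    ring
  -- the third marginal
  have hthird : ∀ (i : Fin m) (b : α),
      (∑ x, ∑ y, if y i = b then π x y else 0) = Q b := by
    intro i b
    rw [Finset.sum_comm]
    have h1 : ∀ y : Fin m → α, (∑ x, if y i = b then π x y else 0)
        = if y i = b then R y else 0 := by
      intro y
      by_cases h : y i = b
      · simp only [if_pos h]
        exact hYmarg y
      · simp only [if_neg h, Finset.sum_const_zero]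
    rw [Finset.sum_congr rfl (fun y _ => h1 y)]
    exact MEC.prod_marginal m Q hQsum i b
  -- sup of Q
  set q := ⨆ x, Q x with hq
  have hne : Nonempty α := Fintype.card_pos_iff.mp (by rw [hcard]; exact hr0)
  have hqbd : ∀ x, Q x ≤ q := fun x =>
    le_ciSup (Set.Finite.bddAbove (Set.finite_range Q)) x
  have hq0 : 0 ≤ q := le_trans (hQpos (Classical.arbitrary α)) (hqbd _)
  have hRq : ∀ y, R y ≤ q ^ m := by
    intro y
    rw [hR]
    calc ∏ j, Q (y j) ≤ ∏ _j : Fin m, q :=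
          Finset.prod_le_prod (fun j _ => hQpos (y j)) (fun j _ => hqbd (y j))
      _ = q ^ m := by rw [Finset.prod_const, Finset.card_univ, Fintype.card_fin]
  -- badness
  set Bad : (Fin m → α) → Prop := fun y => ∃ x x', x ≠ x' ∧ π x y ≠ 0 ∧ π x' y ≠ 0 with hBad
  have hoverlap : ∀ x y, π x y ≠ 0 →
      max (F (e x : ℕ)) (G (g y : ℕ)) < min (F ((e x : ℕ) + 1)) (G ((g y : ℕ) + 1)) := by
    intro x y hne'
    by_contra hcon
    push_neg at hcon
    exact hne' (max_eq_left (by linarith))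
  have hwit : ∀ y, Bad y → ∃ k, k ∈ Finset.Ioo 0 r ∧ G (g y : ℕ) < F k ∧ F k < G ((g y : ℕ) + 1) := by
    intro y hb
    obtain ⟨x, x', hxx, h1, h2⟩ := hb
    have key : ∀ u v : α, (e u : ℕ) < (e v : ℕ) → π u y ≠ 0 → π v y ≠ 0 →
        ∃ k, k ∈ Finset.Ioo 0 r ∧ G (g y : ℕ) < F k ∧ F k < G ((g y : ℕ) + 1) := by
      intro u v huv hu hv
      have o1 := hoverlap u y hu
      have o2 := hoverlap v y hv
      refine ⟨(e v : ℕ), Finset.mem_Ioo.mpr ⟨by omega, (e v).isLt⟩, ?_, ?_⟩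
      · calc G (g y : ℕ) ≤ max (F (e u : ℕ)) (G (g y : ℕ)) := le_max_right _ _
          _ < min (F ((e u : ℕ) + 1)) (G ((g y : ℕ) + 1)) := o1
          _ ≤ F ((e u : ℕ) + 1) := min_le_left _ _
          _ ≤ F (e v : ℕ) := hFmono huv
      · calc F (e v : ℕ) ≤ max (F (e v : ℕ)) (G (g y : ℕ)) := le_max_left _ _
          _ < min (F ((e v : ℕ) + 1)) (G ((g y : ℕ) + 1)) := o2
          _ ≤ G ((g y : ℕ) + 1) := min_le_right _ _
    rcases lt_trichotomy (e x : ℕ) (e x' : ℕ) with h | h | h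
    · exact key x x' h h1 h2
    · exact absurd (e.injective (Fin.ext h)) hxx
    · exact key x' x h h2 h1
  -- good y contribute zero entropy
  have hgood : ∀ y, ¬ Bad y →
      (∑ x, π x y * Real.log (π x y / ∑ x', π x' y)) = 0 := by
    intro y hgb
    apply MEC.ent_fiber_zero
    intro x x' hx hx'
    by_contra hne'
    exact hgb ⟨x, x', hne', hx, hx'⟩
  -- each fiber entropy bounded
  have hfiber : ∀ y, -(∑ x, π x y * Real.log (π x y / ∑ x', π x' y)) ≤ R y * Real.log r := by
    intro y
    have h : -(∑ x, π x y * Real.log (π x y / ∑ x', π x' y)) ≤ (∑ x, π x y) * Real.log r :=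
      MEC.ent_fiber_le r hcard hr0 (fun x => π x y) (fun x => hπpos x y)
    rw [hYmarg y] at h
    rw [hYmarg y]
    exact h
  -- Bound A : condEnt π ≤ log r
  have boundA : condEnt π ≤ Real.log r := by
    unfold condEnt
    rw [← Finset.sum_neg_distrib]
    calc ∑ y, -(∑ x, π x y * Real.log (π x y / ∑ x', π x' y))
        ≤ ∑ y, R y * Real.log r := Finset.sum_le_sum (fun y _ => hfiber y)
      _ = Real.log r := by rw [← Finset.sum_mul, hRsum, one_mul]
  -- Bound B : condEnt π ≤ (r-1) q^m log r
  set B : Finset (Fin m → α) := Finset.univ.filter (fun y => Bad y) with hBdef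
  have hcardB : B.card ≤ r - 1 := by
    have : B.card ≤ (Finset.Ioo 0 r).card := by
      apply Finset.card_le_card_of_injOn
        (fun y => if h : Bad y then (hwit y h).choose else 0)
      · intro y hy
        have hb : Bad y := (Finset.mem_filter.mp hy).2
        simp only [dif_pos hb]
        exact (hwit y hb).choose_spec.1
      · intro y hy y' hy' heq
        have hb : Bad y := (Finset.mem_filter.mp hy).2
        have hb' : Bad y' := (Finset.mem_filter.mp hy').2
        have heq2 : (if h : Bad y then (hwit y h).choose else 0)
            = (if h : Bad y' then (hwit y' h).choose else 0) := heq
        rw [dif_pos hb, dif_pos hb'] at heq2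
        obtain ⟨_, hy1, hy2⟩ := (hwit y hb).choose_spec
        obtain ⟨_, hy1', hy2'⟩ := (hwit y' hb').choose_spec
        rw [heq2] at hy1 hy2
        by_contra hne'
        have hgg : (g y : ℕ) ≠ (g y' : ℕ) := fun hh => hne' (g.injective (Fin.ext hh))
        rcases lt_or_gt_of_ne hgg with h | h
        · have : G ((g y : ℕ) + 1) ≤ G (g y' : ℕ) := hGmono h
          linarith
        · have : G ((g y' : ℕ) + 1) ≤ G (g y : ℕ) := hGmono h
          linarith
    rwa [Nat.card_Ioo, Nat.sub_zero] at this
  have hBsum : ∑ y ∈ B, R y ≤ ((r : ℝ) - 1) * q ^ m := by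
    calc ∑ y ∈ B, R y ≤ ∑ _y ∈ B, q ^ m := Finset.sum_le_sum (fun y _ => hRq y)
      _ = (B.card : ℝ) * q ^ m := by rw [Finset.sum_const, nsmul_eq_mul]
      _ ≤ ((r : ℝ) - 1) * q ^ m := by
          apply mul_le_mul_of_nonneg_right _ (pow_nonneg hq0 m)
          have : (B.card : ℝ) ≤ ((r - 1 : ℕ) : ℝ) := Nat.cast_le.mpr hcardB
          rwa [Nat.cast_sub (le_trans (by norm_num) hr), Nat.cast_one] at this
  have boundB : condEnt π ≤ ((r : ℝ) - 1) * q ^ m * Real.log r := by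
    unfold condEnt
    rw [← Finset.sum_neg_distrib]
    calc ∑ y, -(∑ x, π x y * Real.log (π x y / ∑ x', π x' y))
        ≤ ∑ y, (if Bad y then R y * Real.log r else 0) := by
          apply Finset.sum_le_sum
          intro y _
          by_cases hb : Bad y
          · rw [if_pos hb]; exact hfiber y
          · rw [if_neg hb, hgood y hb, neg_zero]
      _ = ∑ y ∈ B, R y * Real.log r := by rw [Finset.sum_filter]
      _ = (∑ y ∈ B, R y) * Real.log r := by rw [Finset.sum_mul]
      _ ≤ ((r : ℝ) - 1) * q ^ m * Real.log r :=
          mul_le_mul_of_nonneg_right hBsum hlog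
  -- conclude
  have hbound : condEnt π ≤ min 1 (((r : ℝ) - 1) * q ^ m) * Real.log r := by
    rcases min_cases 1 (((r : ℝ) - 1) * q ^ m) with ⟨hmin, _⟩ | ⟨hmin, _⟩
    · rw [hmin, one_mul]; exact boundA
    · rw [hmin]; exact boundB
  unfold Hm Hlist
  refine le_trans (csInf_le ⟨0, ?_⟩ ⟨π, ⟨hπpos, ?_, ?_⟩, rfl⟩) ?_
  · rintro h ⟨π', hc', rfl⟩
    exact le_trans (MEC.condEnt_nonneg π' hc'.1) (le_of_eq (MEC.condEnt_inst _ _ π'))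
  · intro x
    exact (MEC.sum_inst _ _ (fun y => π x y)).trans (hXmarg x)
  · intro i b
    exact (Finset.sum_congr rfl (fun x _ => MEC.sum_inst _ _
      (fun y => if y i = b then π x y else 0))).trans (hthird i b)
  · exact le_trans (le_of_eq (MEC.condEnt_inst _ _ π)) hbound

end
end

section
/- Let r ≥ 2 be an integer, let P ∈ Δ([r]) be fully supported, and let Q_1, …, Q_m be probability distributions on finite alphabets Y_1, …, Y_m. Fix an integer ℓ ≥ 1 that divides m, and for each block t ∈ [m/ℓ] let B_t = {(t−1)ℓ+1, …, tℓ}. Suppose there exist deterministic maps φ_t : ∏_{i∈B_t} Y_i → [r] such that for the product law of (Y_i)_{i∈B_t} with independent Y_i ∼ Q_i, the pushforward law R_t of Z_t := φ_t((Y_i)_{i∈B_t}) satisfies R_t(x) ≥ q̃_min > 0 for all x ∈ [r] and all t. Let n_* := ⌈log(8/p_min) / (−log(1 − r·q̃_min))⌉ (with n_* = 1 when r·q̃_min = 1), where p_min := min_{x∈[r]} P(x). If m/ℓ ≥ 2·n_*, then H(P‖Q_1,…,Q_m) = 0. -/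
open scoped Classical BigOperators

noncomputable section

namespace MECaux

/-- real-valued indicator -/
def indi (c : Prop) : ℝ := if c then 1 else 0

lemma indi_nonneg (c : Prop) : 0 ≤ indi c := by
  unfold indi; split <;> norm_num

lemma indi_of {c : Prop} (h : c) : indi c = 1 := if_pos h

lemma indi_not {c : Prop} (h : ¬ c) : indi c = 0 := if_neg h

lemma indi_congr {c d : Prop} (h : c ↔ d) : indi c = indi d := by
  by_cases hc : c
  · rw [indi_of hc, indi_of (h.mp hc)]
  · rw [indi_not hc, indi_not (fun hd => hc (h.mpr hd))]

lemma mul_indi (a : ℝ) (c : Prop) : a * indi c = if c then a else 0 := by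
  unfold indi; split <;> simp

lemma sum_indi_eq_one {α : Type*} [Fintype α] (a : α) : ∑ x : α, indi (a = x) = 1 := by
  unfold indi
  rw [Finset.sum_ite_eq Finset.univ a (fun _ => (1:ℝ))]
  simp

lemma sum_indi_eq_one' {α : Type*} [Fintype α] (a : α) : ∑ x : α, indi (x = a) = 1 := by
  unfold indi
  rw [Finset.sum_ite_eq' Finset.univ a (fun _ => (1:ℝ))]
  simp

section PiSpace

variable {κ : Type*} [Fintype κ] {Z : κ → Type*} [∀ i, Fintype (Z i)]

/-- product weight -/
def pw (Q : ∀ i, Z i → ℝ) (y : ∀ i, Z i) : ℝ := ∏ i, Q i (y i)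

lemma pw_nonneg {Q : ∀ i, Z i → ℝ} (hQ0 : ∀ i b, 0 ≤ Q i b) (y : ∀ i, Z i) : 0 ≤ pw Q y :=
  Finset.prod_nonneg (fun i _ => hQ0 i (y i))

lemma sum_fintype_congr {α : Type*} (F G : Fintype α) (f : α → ℝ) :
    @Finset.sum α ℝ _ (@Finset.univ α F) f = @Finset.sum α ℝ _ (@Finset.univ α G) f := by
  cases Subsingleton.elim F G
  rfl

lemma sum_prod_pi [DecidableEq κ] [Fintype (∀ i, Z i)] (f : ∀ i, Z i → ℝ) :
    (∑ y : ∀ i, Z i, ∏ i, f i (y i)) = ∏ i, ∑ b, f i b := by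
  rw [Finset.prod_univ_sum, Fintype.piFinset_univ]
  exact sum_fintype_congr _ _ _

lemma sum_pw [DecidableEq κ] [Fintype (∀ i, Z i)] (Q : ∀ i, Z i → ℝ) (hQ1 : ∀ i, ∑ b, Q i b = 1) :
    ∑ y : ∀ i, Z i, pw Q y = 1 := by
  unfold pw
  rw [sum_prod_pi]
  simp [hQ1]

set_option maxHeartbeats 1000000 in
/-- evaluation of a single-coordinate observable against the product weight -/
lemma sum_pw_coord [DecidableEq κ] [Fintype (∀ i, Z i)] (Q : ∀ i, Z i → ℝ) (hQ1 : ∀ i, ∑ b, Q i b = 1) (i₀ : κ) (h : Z i₀ → ℝ) :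
    ∑ y : ∀ i, Z i, pw Q y * h (y i₀) = ∑ b, Q i₀ b * h b := by
  classical
  let H : ∀ i, Z i → ℝ := fun i => if hi : i = i₀ then (fun b => h (hi ▸ b)) else (fun _ => 1)
  have hH₀ : H i₀ = h := by
    simp only [H, dif_pos rfl]
  have hHne : ∀ i, i ≠ i₀ → H i = fun _ => 1 := by
    intro i hi; simp only [H, dif_neg hi]
  have key : ∀ y : ∀ i, Z i,
      pw Q y * h (y i₀) = ∏ i, (Q i (y i) * H i (y i)) := by
    intro y
    rw [Finset.prod_mul_distrib]
    unfold pw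
    congr 1
    rw [Finset.prod_eq_single i₀]
    · rw [hH₀]
    · intro i _ hi; rw [hHne i hi]
    · simp
  calc ∑ y : ∀ i, Z i, pw Q y * h (y i₀)
      = ∑ y : ∀ i, Z i, ∏ i, (Q i (y i) * H i (y i)) :=
        Finset.sum_congr rfl (fun y _ => key y)
    _ = ∏ i, ∑ b, (Q i b * H i b) := sum_prod_pi (fun i b => Q i b * H i b)
    _ = ∑ b, Q i₀ b * h b := by
        rw [Finset.prod_eq_single i₀]
        · rw [hH₀]
        · intro i _ hi
          rw [hHne i hi]
          simpa using hQ1 i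
        · simp

set_option maxHeartbeats 1000000 in
/-- independence: expectations of functions of disjoint coordinate blocks factorize -/
lemma indep [DecidableEq κ] [Fintype (∀ i, Z i)] (Q : ∀ i, Z i → ℝ) (hQ1 : ∀ i, ∑ b, Q i b = 1) (hne : ∀ i, Nonempty (Z i))
    (pr : κ → Prop) [DecidablePred pr] (f g : (∀ i, Z i) → ℝ)
    (hf : ∀ y₁ y₂ : ∀ i, Z i, (∀ i, pr i → y₁ i = y₂ i) → f y₁ = f y₂)
    (hg : ∀ y₁ y₂ : ∀ i, Z i, (∀ i, ¬ pr i → y₁ i = y₂ i) → g y₁ = g y₂) :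
    (∑ y : ∀ i, Z i, pw Q y * (f y * g y))
      = (∑ y : ∀ i, Z i, pw Q y * f y) * (∑ y : ∀ i, Z i, pw Q y * g y) := by
  classical
  set e : ((∀ i : {x // pr x}, Z i.1) × (∀ i : {x // ¬ pr x}, Z i.1)) ≃ (∀ i, Z i) :=
    (Equiv.piEquivPiSubtypeProd pr Z).symm with he
  have happly₁ : ∀ (uv) (i : {x // pr x}), e uv i.1 = uv.1 i := by
    intro uv i
    rw [he, Equiv.piEquivPiSubtypeProd_symm_apply, dif_pos i.2]
  have happly₂ : ∀ (uv) (i : {x // ¬ pr x}), e uv i.1 = uv.2 i := by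
    intro uv i
    rw [he, Equiv.piEquivPiSubtypeProd_symm_apply, dif_neg i.2]
  set A : (∀ i : {x // pr x}, Z i.1) → ℝ := fun u => ∏ i, Q i.1 (u i) with hA
  set B : (∀ i : {x // ¬ pr x}, Z i.1) → ℝ := fun v => ∏ i, Q i.1 (v i) with hB
  have hsplit : ∀ uv, pw Q (e uv) = A uv.1 * B uv.2 := by
    intro uv
    rw [pw, ← Fintype.prod_subtype_mul_prod_subtype pr (fun i => Q i (e uv i)), hA, hB]
    congr 1
    · exact Finset.prod_congr rfl (fun i _ => by rw [happly₁ uv i])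
    · exact Finset.prod_congr rfl (fun i _ => by rw [happly₂ uv i])
  obtain ⟨u₀⟩ : Nonempty (∀ i : {x // pr x}, Z i.1) := ⟨fun i => (hne i.1).some⟩
  obtain ⟨v₀⟩ : Nonempty (∀ i : {x // ¬ pr x}, Z i.1) := ⟨fun i => (hne i.1).some⟩
  have hfe : ∀ u v, f (e (u, v)) = f (e (u, v₀)) := by
    intro u v
    apply hf
    intro i hi
    exact (happly₁ (u, v) ⟨i, hi⟩).trans (happly₁ (u, v₀) ⟨i, hi⟩).symm
  have hge : ∀ u v, g (e (u, v)) = g (e (u₀, v)) := by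
    intro u v
    apply hg
    intro i hi
    exact (happly₂ (u, v) ⟨i, hi⟩).trans (happly₂ (u₀, v) ⟨i, hi⟩).symm
  have htrans : ∀ F : (∀ i, Z i) → ℝ, (∑ y : ∀ i, Z i, F y) = ∑ u, ∑ v, F (e (u, v)) := by
    intro F
    rw [← Equiv.sum_comp e F, Fintype.sum_prod_type]
  have hAsum : (∑ u, A u) = 1 := by
    have h := sum_pw (fun i : {x // pr x} => Q i.1) (fun i => hQ1 i.1)
    exact (sum_fintype_congr _ _ _).trans h
  have hBsum : (∑ v, B v) = 1 := by
    have h := sum_pw (fun i : {x // ¬ pr x} => Q i.1) (fun i => hQ1 i.1)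
    exact (sum_fintype_congr _ _ _).trans h
  have hL : (∑ y : ∀ i, Z i, pw Q y * (f y * g y))
      = (∑ u, A u * f (e (u, v₀))) * (∑ v, B v * g (e (u₀, v))) := by
    rw [htrans (fun y => pw Q y * (f y * g y))]
    rw [Finset.sum_mul_sum]
    apply Finset.sum_congr rfl; intro u _
    apply Finset.sum_congr rfl; intro v _
    rw [hsplit (u, v), hfe u v, hge u v]
    ring
  have hR1 : (∑ y : ∀ i, Z i, pw Q y * f y) = (∑ u, A u * f (e (u, v₀))) := by
    rw [htrans (fun y => pw Q y * f y)]
    have : ∀ u, (∑ v, pw Q (e (u, v)) * f (e (u, v))) = (A u * f (e (u, v₀))) * (∑ v, B v) := by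
      intro u
      rw [Finset.mul_sum]
      apply Finset.sum_congr rfl; intro v _
      rw [hsplit (u, v), hfe u v]
      ring
    rw [Finset.sum_congr rfl (fun u _ => this u)]
    rw [hBsum]
    simp
  have hR2 : (∑ y : ∀ i, Z i, pw Q y * g y) = (∑ v, B v * g (e (u₀, v))) := by
    rw [htrans (fun y => pw Q y * g y)]
    have : ∀ u, (∑ v, pw Q (e (u, v)) * g (e (u, v))) = A u * (∑ v, B v * g (e (u₀, v))) := by
      intro u
      rw [Finset.mul_sum]
      apply Finset.sum_congr rfl; intro v _
      rw [hsplit (u, v), hge u v]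
      ring
    rw [Finset.sum_congr rfl (fun u _ => this u)]
    rw [← Finset.sum_mul, hAsum, one_mul]
  rw [hL, hR1, hR2]

end PiSpace

section Main

variable {k r : ℕ}

set_option maxHeartbeats 2000000 in
lemma main_construction [NeZero r]
    (V : Fin k → Type*) [∀ t, Fintype (V t)] (hVne : ∀ t, Nonempty (V t))
    (QW : ∀ t, V t → ℝ) (hQW0 : ∀ t w, 0 ≤ QW t w) (hQW1 : ∀ t, ∑ w, QW t w = 1)
    (zm : ∀ t, V t → ZMod r)
    (q : ℝ) (hq0 : 0 < q)
    (hfloor : ∀ t d, q ≤ ∑ w, QW t w * indi (zm t w = d))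
    (P' : ZMod r → ℝ) (pm : ℝ) (hpm0 : 0 < pm) (hpmle : ∀ d, pm ≤ P' d)
    (hP'1 : ∑ d, P' d = 1)
    (n : ℕ) (hn1 : 1 ≤ n) (hnk : 2 * n ≤ k)
    (hdev : (1 - (r : ℝ) * q) ^ n ≤ pm / 8) :
    ∃ (Λ : (∀ t, V t) → ℝ) (dec : (∀ t, V t) → ZMod r),
      (∀ Y, 0 ≤ Λ Y) ∧
      (∀ d, (∑ Y, Λ Y * indi (dec Y = d)) = P' d) ∧
      (∀ t (h : V t → ℝ), (∑ Y, Λ Y * h (Y t)) = ∑ w, QW t w * h w) := by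
  classical
  have hr0 : 0 < r := Nat.pos_of_ne_zero (NeZero.ne r)
  have hrR : (0:ℝ) < r := by exact_mod_cast hr0
  have hk1 : 0 < k := by omega
  have hcard : Fintype.card (ZMod r) = r := ZMod.card r
  have hP'pos : ∀ d, 0 < P' d := fun d => lt_of_lt_of_le hpm0 (hpmle d)
  -- block pushforwards
  set RB : Fin k → ZMod r → ℝ := fun t d => ∑ w, QW t w * indi (zm t w = d) with hRB
  have hRBq : ∀ t d, q ≤ RB t d := hfloor
  have hRB1 : ∀ t, ∑ d, RB t d = 1 := by
    intro t
    simp only [hRB]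
    rw [Finset.sum_comm]
    have : ∀ w : V t, ∑ d : ZMod r, QW t w * indi (zm t w = d) = QW t w := by
      intro w
      rw [← Finset.mul_sum, sum_indi_eq_one (zm t w), mul_one]
    rw [Finset.sum_congr rfl (fun w _ => this w)]
    exact hQW1 t
  have hrq1 : (r:ℝ) * q ≤ 1 := by
    have t0 : Fin k := ⟨0, hk1⟩
    calc (r:ℝ) * q = ∑ _d : ZMod r, q := by
          rw [Finset.sum_const, Finset.card_univ, hcard, nsmul_eq_mul]
      _ ≤ ∑ d, RB t0 d := Finset.sum_le_sum (fun d _ => hRBq t0 d)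
      _ = 1 := hRB1 t0
  have hrqnn : 0 ≤ 1 - (r:ℝ) * q := by linarith
  have hpmr : pm * r ≤ 1 := by
    calc pm * r = ∑ _d : ZMod r, pm := by
          rw [Finset.sum_const, Finset.card_univ, hcard, nsmul_eq_mul]; ring
      _ ≤ ∑ d, P' d := Finset.sum_le_sum (fun d _ => hpmle d)
      _ = 1 := hP'1
  -- index blocks
  have hinjA : Function.Injective (fun i : Fin n => (⟨i.1, by omega⟩ : Fin k)) := by
    intro a b h
    have h2 := congrArg Fin.val h
    exact Fin.ext h2
  have hinjB : Function.Injective (fun i : Fin n => (⟨n + i.1, by omega⟩ : Fin k)) := by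
    intro a b h
    have h2 := congrArg Fin.val h
    have h3 : n + (a : ℕ) = n + (b : ℕ) := h2
    exact Fin.ext (by omega)
  set SA : Finset (Fin k) := Finset.image (fun i : Fin n => (⟨i.1, by omega⟩ : Fin k)) Finset.univ with hSA
  set SB : Finset (Fin k) := Finset.image (fun i : Fin n => (⟨n + i.1, by omega⟩ : Fin k)) Finset.univ with hSB
  have hSAmem : ∀ t : Fin k, t ∈ SA ↔ (t : ℕ) < n := by
    intro t
    rw [hSA, Finset.mem_image]
    constructor
    · rintro ⟨i, _, rfl⟩; exact i.2
    · intro ht; exact ⟨⟨t.1, ht⟩, Finset.mem_univ _, Fin.ext rfl⟩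
  have hSBmem : ∀ t : Fin k, t ∈ SB ↔ n ≤ (t : ℕ) ∧ (t : ℕ) < 2 * n := by
    intro t
    rw [hSB, Finset.mem_image]
    constructor
    · rintro ⟨i, _, rfl⟩; simp; omega
    · rintro ⟨h1, h2⟩; exact ⟨⟨t.1 - n, by omega⟩, Finset.mem_univ _, Fin.ext (by simp; omega)⟩
  have hSAcard : SA.card = n := by
    rw [hSA, Finset.card_image_of_injective _ hinjA, Finset.card_univ, Fintype.card_fin]
  have hSBcard : SB.card = n := by
    rw [hSB, Finset.card_image_of_injective _ hinjB, Finset.card_univ, Fintype.card_fin]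
  have hAB : ∀ t, t ∈ SB → t ∉ SA := by
    intro t htB htA
    rw [hSAmem] at htA
    rw [hSBmem] at htB
    omega
  -- partial sums and their laws
  set sSf : Finset (Fin k) → (∀ t, V t) → ZMod r := fun S Y => ∑ t ∈ S, zm t (Y t) with hsSf
  set GS : Finset (Fin k) → ZMod r → ℝ := fun S σ => ∑ Y, pw QW Y * indi (sSf S Y = σ) with hGS
  have hGS0 : ∀ S σ, 0 ≤ GS S σ := by
    intro S σ
    simp only [hGS]
    exact Finset.sum_nonneg (fun Y _ => mul_nonneg (pw_nonneg hQW0 Y) (indi_nonneg _))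
  have hGS1 : ∀ S, ∑ σ, GS S σ = 1 := by
    intro S
    simp only [hGS]
    rw [Finset.sum_comm]
    have : ∀ Y : (∀ t, V t), ∑ σ, pw QW Y * indi (sSf S Y = σ) = pw QW Y := by
      intro Y
      rw [← Finset.mul_sum, sum_indi_eq_one (sSf S Y), mul_one]
    rw [Finset.sum_congr rfl (fun Y _ => this Y)]
    exact sum_pw QW hQW1
  have hsS_congr : ∀ (S : Finset (Fin k)) (Y₁ Y₂ : ∀ t, V t),
      (∀ t, t ∈ S → Y₁ t = Y₂ t) → sSf S Y₁ = sSf S Y₂ := by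
    intro S Y₁ Y₂ hYY
    simp only [hsSf]
    exact Finset.sum_congr rfl (fun t ht => by rw [hYY t ht])
  have hGSrec : ∀ (t : Fin k) (S : Finset (Fin k)), t ∉ S → ∀ σ,
      GS (insert t S) σ = ∑ d, RB t d * GS S (σ - d) := by
    intro t S htS σ
    have hres : ∀ (a b : ZMod r), indi (a + b = σ) = ∑ d, indi (a = d) * indi (b = σ - d) := by
      intro a b
      rw [Finset.sum_eq_single a]
      · rw [indi_of rfl, one_mul]
        exact indi_congr (eq_sub_iff_add_eq').symm
      · intro d _ hd
        rw [indi_not (fun h => hd h.symm), zero_mul]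
      · intro h; exact absurd (Finset.mem_univ a) h
    have step1 : GS (insert t S) σ
        = ∑ Y, ∑ d, pw QW Y * (indi (zm t (Y t) = d) * indi (sSf S Y = σ - d)) := by
      simp only [hGS]
      apply Finset.sum_congr rfl
      intro Y _
      have h2 : sSf (insert t S) Y = zm t (Y t) + sSf S Y := by
        simp only [hsSf]; exact Finset.sum_insert htS
      rw [h2, hres, Finset.mul_sum]
    rw [step1, Finset.sum_comm]
    apply Finset.sum_congr rfl
    intro d _
    have hindep : (∑ Y : (∀ t', V t'), pw QW Y * (indi (zm t (Y t) = d) * indi (sSf S Y = σ - d)))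
        = (∑ Y : (∀ t', V t'), pw QW Y * indi (zm t (Y t) = d))
          * (∑ Y : (∀ t', V t'), pw QW Y * indi (sSf S Y = σ - d)) :=
      indep QW hQW1 hVne (fun t' => t' = t)
        (fun Y => indi (zm t (Y t) = d)) (fun Y => indi (sSf S Y = σ - d))
        (fun Y₁ Y₂ h => by
          show indi (zm t (Y₁ t) = d) = indi (zm t (Y₂ t) = d)
          rw [h t rfl])
        (fun Y₁ Y₂ h => by
          show indi (sSf S Y₁ = σ - d) = indi (sSf S Y₂ = σ - d)
          rw [hsS_congr S Y₁ Y₂ (fun t' ht' => h t' (fun he => htS (he ▸ ht')))])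
    rw [hindep]
    congr 1
    rw [sum_pw_coord QW hQW1 t (fun w => indi (zm t w = d))]
  have hdevS : ∀ S : Finset (Fin k), ∀ σ, |GS S σ - 1/r| ≤ (1 - (r:ℝ)*q) ^ S.card := by
    intro S
    induction S using Finset.induction_on with
    | empty =>
      intro σ
      have h0 : GS ∅ σ = indi ((0:ZMod r) = σ) := by
        simp only [hGS]
        have : ∀ Y : (∀ t, V t), sSf ∅ Y = 0 := by
          intro Y; simp only [hsSf]; exact Finset.sum_empty
        rw [Finset.sum_congr rfl (fun Y _ => by rw [this Y])]
        rw [← Finset.sum_mul, sum_pw QW hQW1, one_mul]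
      rw [h0, Finset.card_empty, pow_zero]
      have h1r : 0 < 1/(r:ℝ) := by positivity
      have h1r' : 1/(r:ℝ) ≤ 1 := by
        rw [div_le_one hrR]
        exact_mod_cast hr0
      unfold indi
      split
      · rw [abs_le]; constructor <;> linarith
      · rw [abs_le]; constructor <;> linarith
    | @insert t S htS ih =>
      intro σ
      rw [hGSrec t S htS σ, Finset.card_insert_of_notMem htS, pow_succ]
      have hGsum : ∑ d, GS S (σ - d) = 1 := by
        have he : (∑ d, GS S (σ - d)) = ∑ τ, GS S τ := Equiv.sum_comp (Equiv.subLeft σ) (GS S)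
        rw [he]
        exact hGS1 S
      have c1 : ∑ _d : ZMod r, q * (1/(r:ℝ)) = q := by
        rw [Finset.sum_const, Finset.card_univ, hcard, nsmul_eq_mul]
        field_simp
      have c2 : ∑ d, q * GS S (σ - d) = q := by
        rw [← Finset.mul_sum, hGsum, mul_one]
      have c3 : ∑ d, RB t d * (1/(r:ℝ)) = 1/r := by
        rw [← Finset.sum_mul, hRB1 t, one_mul]
      have hkey : ∑ d, RB t d * GS S (σ - d) - 1/r
          = ∑ d, (RB t d - q) * (GS S (σ - d) - 1/r) := by
        have e1 : ∑ d, (RB t d - q) * (GS S (σ - d) - 1/r)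
            = (∑ d, (RB t d * GS S (σ - d) - q * GS S (σ - d)))
              - ∑ d, (RB t d * (1/(r:ℝ)) - q * (1/(r:ℝ))) := by
          rw [← Finset.sum_sub_distrib]
          apply Finset.sum_congr rfl
          intro d _
          ring
        rw [e1, Finset.sum_sub_distrib, Finset.sum_sub_distrib, c1, c2, c3]
        ring
      rw [hkey]
      calc |∑ d, (RB t d - q) * (GS S (σ - d) - 1/r)|
          ≤ ∑ d, |(RB t d - q) * (GS S (σ - d) - 1/r)| := Finset.abs_sum_le_sum_abs _ _
        _ ≤ ∑ d, (RB t d - q) * (1 - (r:ℝ)*q) ^ S.card := by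
            apply Finset.sum_le_sum
            intro d _
            rw [abs_mul, abs_of_nonneg (by linarith [hRBq t d])]
            exact mul_le_mul_of_nonneg_left (ih (σ - d)) (by linarith [hRBq t d])
        _ = (1 - (r:ℝ)*q) ^ S.card * (1 - (r:ℝ)*q) := by
            rw [← Finset.sum_mul]
            have hsum : ∑ d, (RB t d - q) = 1 - (r:ℝ)*q := by
              rw [Finset.sum_sub_distrib, hRB1 t, Finset.sum_const, Finset.card_univ, hcard,
                nsmul_eq_mul]
            rw [hsum, mul_comm]
  -- the two halves
  set GA : ZMod r → ℝ := GS SA with hGA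
  set GB : ZMod r → ℝ := GS SB with hGB
  have hGAdev : ∀ σ, |GA σ - 1/r| ≤ pm/8 := by
    intro σ
    simp only [hGA]
    have h2 := hdevS SA σ
    rw [hSAcard] at h2
    exact le_trans h2 hdev
  have hGBdev : ∀ σ, |GB σ - 1/r| ≤ pm/8 := by
    intro σ
    simp only [hGB]
    have h2 := hdevS SB σ
    rw [hSBcard] at h2
    exact le_trans h2 hdev
  have hGA1 : ∑ σ, GA σ = 1 := by simp only [hGA]; exact hGS1 SA
  have hGB1 : ∑ σ, GB σ = 1 := by simp only [hGB]; exact hGS1 SB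
  have hpm1r : pm ≤ 1/(r:ℝ) := by
    rw [le_div_iff₀ hrR]
    linarith
  have hGApos : ∀ σ, 0 < GA σ := by
    intro σ
    have h2 := abs_le.mp (hGAdev σ)
    have h4 : pm/8 < 1/(r:ℝ) := by linarith
    linarith [h2.1]
  have hGBpos : ∀ σ, 0 < GB σ := by
    intro σ
    have h2 := abs_le.mp (hGBdev σ)
    have h4 : pm/8 < 1/(r:ℝ) := by linarith
    linarith [h2.1]
  -- shifted sums of P'
  have hshiftR : ∀ c : ZMod r, ∑ τ, P' (τ + c) = 1 := by
    intro c
    have he : (∑ τ, P' (τ + c)) = ∑ τ, P' τ := Equiv.sum_comp (Equiv.addRight c) P'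
    rw [he]; exact hP'1
  have hshiftL : ∀ c : ZMod r, ∑ τ, P' (c + τ) = 1 := by
    intro c
    have he : (∑ τ, P' (c + τ)) = ∑ τ, P' τ := Equiv.sum_comp (Equiv.addLeft c) P'
    rw [he]; exact hP'1
  set AP : ZMod r → ℝ := fun σB => ∑ τ, GA τ * P' (τ + σB) with hAPdef
  have hP'0 : ∀ d, 0 ≤ P' d := fun d => (hP'pos d).le
  have hAPdev : ∀ σB, |AP σB - 1/r| ≤ pm/8 := by
    intro σB
    have e1 : AP σB - 1/r = ∑ τ, (GA τ - 1/r) * P' (τ + σB) := by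
      simp only [hAPdef]
      have e2 : ∑ τ, (GA τ - 1/r) * P' (τ + σB)
          = (∑ τ, GA τ * P' (τ + σB)) - (1/r) * ∑ τ, P' (τ + σB) := by
        rw [Finset.mul_sum, ← Finset.sum_sub_distrib]
        exact Finset.sum_congr rfl (fun τ _ => by ring)
      rw [e2, hshiftR σB]
      ring
    rw [e1]
    calc |∑ τ, (GA τ - 1/r) * P' (τ + σB)|
        ≤ ∑ τ, |(GA τ - 1/r) * P' (τ + σB)| := Finset.abs_sum_le_sum_abs _ _
      _ ≤ ∑ τ, (pm/8) * P' (τ + σB) := by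
          apply Finset.sum_le_sum
          intro τ _
          rw [abs_mul, abs_of_nonneg (hP'0 _)]
          exact mul_le_mul_of_nonneg_right (hGAdev τ) (hP'0 _)
      _ = pm/8 := by rw [← Finset.mul_sum, hshiftR σB, mul_one]
  have hAP1 : ∑ σB, AP σB = 1 := by
    simp only [hAPdef]
    rw [Finset.sum_comm]
    have e1 : ∀ τ, ∑ σB, GA τ * P' (τ + σB) = GA τ := by
      intro τ; rw [← Finset.mul_sum, hshiftL τ, mul_one]
    rw [Finset.sum_congr rfl (fun τ _ => e1 τ)]
    exact hGA1
  set Fm : ZMod r → ZMod r → ℝ := fun a b => GA a * P' (a + b) + (GB b - AP b)/r with hFmdef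
  have hFnn : ∀ a b, 0 ≤ Fm a b := by
    intro a b
    simp only [hFmdef]
    have h1 := abs_le.mp (hGBdev b)
    have h2 := abs_le.mp (hAPdev b)
    have h3 := abs_le.mp (hGAdev a)
    have hβ : -(pm/4) ≤ GB b - AP b := by linarith [h1.1, h2.2]
    have hGAlb : (7/8) * (1/(r:ℝ)) ≤ GA a := by linarith [h3.1]
    have hP : pm ≤ P' (a+b) := hpmle _
    have hprod : (7/8) * (1/(r:ℝ)) * pm ≤ GA a * P' (a+b) :=
      mul_le_mul hGAlb hP hpm0.le (hGApos a).le
    have hdivr : (-(pm/4)) / (r:ℝ) ≤ (GB b - AP b)/r := by gcongr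
    have hfin : 0 ≤ (7/8) * (1/(r:ℝ)) * pm + (-(pm/4))/r := by
      have e : (7/8) * (1/(r:ℝ)) * pm + (-(pm/4))/r = (pm * (5/8)) / r := by ring
      rw [e]
      positivity
    linarith [hprod, hdivr, hfin]
  have hrowF : ∀ a, ∑ b, Fm a b = GA a := by
    intro a
    simp only [hFmdef]
    rw [Finset.sum_add_distrib, ← Finset.mul_sum, hshiftL a, mul_one]
    have e : ∑ b, (GB b - AP b)/(r:ℝ) = 0 := by
      rw [← Finset.sum_div, Finset.sum_sub_distrib, hGB1, hAP1]
      simp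
    rw [e, add_zero]
  have hcolF : ∀ b, ∑ a, Fm a b = GB b := by
    intro b
    simp only [hFmdef]
    rw [Finset.sum_add_distrib]
    have e1 : (∑ a, GA a * P' (a + b)) = AP b := by simp only [hAPdef]
    have e2 : ∑ _a : ZMod r, (GB b - AP b)/(r:ℝ) = GB b - AP b := by
      rw [Finset.sum_const, Finset.card_univ, hcard, nsmul_eq_mul]
      field_simp
    rw [e1, e2]
    ring
  have hdiagF : ∀ δ, ∑ a, Fm a (δ - a) = P' δ := by
    intro δ
    simp only [hFmdef]
    rw [Finset.sum_add_distrib]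
    have e1 : ∑ a, GA a * P' (a + (δ - a)) = P' δ := by
      have e0 : ∀ a : ZMod r, a + (δ - a) = δ := fun a => by ring
      rw [Finset.sum_congr rfl (fun a _ => by rw [e0 a])]
      rw [← Finset.sum_mul, hGA1, one_mul]
    have e2 : ∑ a, (GB (δ - a) - AP (δ - a))/(r:ℝ) = 0 := by
      rw [← Finset.sum_div, Finset.sum_sub_distrib]
      have f1 : (∑ a, GB (δ - a)) = 1 := by
        have he : (∑ a, GB (δ - a)) = ∑ τ, GB τ := Equiv.sum_comp (Equiv.subLeft δ) GB
        rw [he]; exact hGB1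
      have f2 : (∑ a, AP (δ - a)) = 1 := by
        have he : (∑ a, AP (δ - a)) = ∑ τ, AP τ := Equiv.sum_comp (Equiv.subLeft δ) AP
        rw [he]; exact hAP1
      rw [f1, f2]
      simp
    rw [e1, e2, add_zero]
  -- the two half-sums as functions
  set sAf : (∀ t, V t) → ZMod r := fun Y => sSf SA Y with hsAf
  set sBf : (∀ t, V t) → ZMod r := fun Y => sSf SB Y with hsBf
  have hGAeval : ∀ a, GA a = ∑ Y, pw QW Y * indi (sAf Y = a) := by
    intro a; simp only [hGA, hGS, hsAf]
  have hGBeval : ∀ b, GB b = ∑ Y, pw QW Y * indi (sBf Y = b) := by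
    intro b; simp only [hGB, hGS, hsBf]
  have hsA_inv : ∀ (Y₁ Y₂ : ∀ t, V t), (∀ t, t ∈ SA → Y₁ t = Y₂ t) → sAf Y₁ = sAf Y₂ := by
    intro Y₁ Y₂ hy; simp only [hsAf]; exact hsS_congr SA Y₁ Y₂ hy
  have hsB_inv : ∀ (Y₁ Y₂ : ∀ t, V t), (∀ t, t ∈ SB → Y₁ t = Y₂ t) → sBf Y₁ = sBf Y₂ := by
    intro Y₁ Y₂ hy; simp only [hsBf]; exact hsS_congr SB Y₁ Y₂ hy
  -- pointwise double resolution
  have hres2 : ∀ (Ψ : ZMod r → ZMod r → ℝ) (u v : ZMod r),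
      Ψ u v = ∑ a, ∑ b, indi (u = a) * indi (v = b) * Ψ a b := by
    intro Ψ u v
    have inner : ∀ a, (∑ b, indi (u = a) * indi (v = b) * Ψ a b) = indi (u = a) * Ψ a v := by
      intro a
      rw [Finset.sum_eq_single v]
      · rw [indi_of rfl, mul_one]
      · intro b _ hb
        rw [indi_not (show ¬ (v = b) from fun hx => hb hx.symm)]
        ring
      · intro hv; exact absurd (Finset.mem_univ v) hv
    rw [Finset.sum_congr rfl (fun a _ => inner a)]
    rw [Finset.sum_eq_single u]
    · rw [indi_of rfl, one_mul]
    · intro a _ ha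
      rw [indi_not (fun hx => ha hx.symm), zero_mul]
    · intro hu; exact absurd (Finset.mem_univ u) hu
  -- joint fiber decomposition with an extra within-block observable
  -- (formulated for a weight function W on configurations)
  have hjoint : ∀ (W : (∀ t', V t') → ℝ),
      (∀ Y₁ Y₂, (∀ t', ¬ t' ∈ SA → Y₁ t' = Y₂ t') → W Y₁ = W Y₂) →
      ∀ a, (∑ Y, pw QW Y * (indi (sAf Y = a) * W Y))
        = (∑ Y, pw QW Y * indi (sAf Y = a)) * (∑ Y, pw QW Y * W Y) := by
    intro W hWinv a
    exact indep QW hQW1 hVne (fun t' => t' ∈ SA)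
      (fun Y => indi (sAf Y = a)) W
      (fun Y₁ Y₂ hy => by
        show indi (sAf Y₁ = a) = indi (sAf Y₂ = a)
        rw [hsA_inv Y₁ Y₂ hy])
      hWinv
  -- main fiber lemma
  have hfiber : ∀ Ψ : ZMod r → ZMod r → ℝ,
      (∑ Y, pw QW Y * Ψ (sAf Y) (sBf Y)) = ∑ a, ∑ b, (GA a * GB b) * Ψ a b := by
    intro Ψ
    have step1 : (∑ Y, pw QW Y * Ψ (sAf Y) (sBf Y))
        = ∑ Y, ∑ a, ∑ b, pw QW Y * (indi (sAf Y = a) * indi (sBf Y = b)) * Ψ a b := by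
      apply Finset.sum_congr rfl
      intro Y _
      rw [hres2 Ψ (sAf Y) (sBf Y), Finset.mul_sum]
      apply Finset.sum_congr rfl; intro a _
      rw [Finset.mul_sum]
      apply Finset.sum_congr rfl; intro b _
      ring
    rw [step1, Finset.sum_comm]
    apply Finset.sum_congr rfl; intro a _
    rw [Finset.sum_comm]
    apply Finset.sum_congr rfl; intro b _
    have hind : (∑ Y, pw QW Y * (indi (sAf Y = a) * indi (sBf Y = b)))
        = (∑ Y, pw QW Y * indi (sAf Y = a)) * (∑ Y, pw QW Y * indi (sBf Y = b)) :=
      hjoint (fun Y => indi (sBf Y = b))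
        (fun Y₁ Y₂ hy => by
          show indi (sBf Y₁ = b) = indi (sBf Y₂ = b)
          rw [hsB_inv Y₁ Y₂ (fun t' ht' => hy t' (hAB t' ht'))]) a
    calc ∑ Y, pw QW Y * (indi (sAf Y = a) * indi (sBf Y = b)) * Ψ a b
        = (∑ Y, pw QW Y * (indi (sAf Y = a) * indi (sBf Y = b))) * Ψ a b := by
          rw [← Finset.sum_mul]
      _ = ((∑ Y, pw QW Y * indi (sAf Y = a)) * (∑ Y, pw QW Y * indi (sBf Y = b))) * Ψ a b := by
          rw [hind]
      _ = (GA a * GB b) * Ψ a b := by rw [← hGAeval a, ← hGBeval b]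
  -- the normalized kernel
  set Psi : ZMod r → ZMod r → ℝ := fun a b => Fm a b / (GA a * GB b) with hPsi
  have hPsinn : ∀ a b, 0 ≤ Psi a b := by
    intro a b
    simp only [hPsi]
    exact div_nonneg (hFnn a b) (mul_pos (hGApos a) (hGBpos b)).le
  have hPsiRow : ∀ a, ∑ b, GB b * Psi a b = 1 := by
    intro a
    have h1 : GA a ≠ 0 := (hGApos a).ne'
    have e : ∀ b, GB b * Psi a b = Fm a b / GA a := by
      intro b
      have h2 : GB b ≠ 0 := (hGBpos b).ne'
      simp only [hPsi]
      field_simp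
    rw [Finset.sum_congr rfl (fun b _ => e b), ← Finset.sum_div, hrowF a, div_self h1]
  have hPsiCol : ∀ b, ∑ a, GA a * Psi a b = 1 := by
    intro b
    have h2 : GB b ≠ 0 := (hGBpos b).ne'
    have e : ∀ a, GA a * Psi a b = Fm a b / GB b := by
      intro a
      have h1 : GA a ≠ 0 := (hGApos a).ne'
      simp only [hPsi]
      field_simp
    rw [Finset.sum_congr rfl (fun a _ => e a), ← Finset.sum_div, hcolF b, div_self h2]
  -- the coupling
  refine ⟨fun Y => pw QW Y * Psi (sAf Y) (sBf Y), fun Y => sAf Y + sBf Y, ?_, ?_, ?_⟩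
  · intro Y
    exact mul_nonneg (pw_nonneg hQW0 Y) (hPsinn _ _)
  · intro d
    show (∑ Y, (pw QW Y * Psi (sAf Y) (sBf Y)) * indi (sAf Y + sBf Y = d)) = P' d
    have e0 : ∀ Y : (∀ t', V t'),
        (pw QW Y * Psi (sAf Y) (sBf Y)) * indi (sAf Y + sBf Y = d)
        = pw QW Y * ((fun a b => Psi a b * indi (a + b = d)) (sAf Y) (sBf Y)) := by
      intro Y; ring
    rw [Finset.sum_congr rfl (fun Y _ => e0 Y)]
    rw [hfiber (fun a b => Psi a b * indi (a + b = d))]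
    have e1 : ∀ a b : ZMod r, (GA a * GB b) * ((fun a b => Psi a b * indi (a + b = d)) a b)
        = Fm a b * indi (a + b = d) := by
      intro a b
      have hne1 : GA a ≠ 0 := (hGApos a).ne'
      have hne2 : GB b ≠ 0 := (hGBpos b).ne'
      simp only [hPsi]
      field_simp
    rw [Finset.sum_congr rfl (fun a _ => Finset.sum_congr rfl (fun b _ => e1 a b))]
    have e2 : ∀ a : ZMod r, (∑ b, Fm a b * indi (a + b = d)) = Fm a (d - a) := by
      intro a
      rw [Finset.sum_eq_single (d - a)]
      · rw [indi_of (by ring), mul_one]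
      · intro b _ hb
        rw [indi_not (show ¬ (a + b = d) from fun hx => hb (show b = d - a by rw [← hx]; ring)),
          mul_zero]
      · intro hd; exact absurd (Finset.mem_univ _) hd
    rw [Finset.sum_congr rfl (fun a _ => e2 a)]
    exact hdiagF d
  · intro t h
    show (∑ Y, (pw QW Y * Psi (sAf Y) (sBf Y)) * h (Y t)) = ∑ w, QW t w * h w
    have hcoord : (∑ Y, pw QW Y * h (Y t)) = ∑ w, QW t w * h w := sum_pw_coord QW hQW1 t h
    by_cases htA : t ∈ SA
    · -- observable lives in the first half
      have step1 : (∑ Y, (pw QW Y * Psi (sAf Y) (sBf Y)) * h (Y t))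
          = ∑ a, ∑ b, (∑ Y, pw QW Y * ((indi (sAf Y = a) * h (Y t)) * indi (sBf Y = b))) * Psi a b := by
        have p1 : ∀ Y : (∀ t', V t'), (pw QW Y * Psi (sAf Y) (sBf Y)) * h (Y t)
            = ∑ a, ∑ b, pw QW Y * ((indi (sAf Y = a) * h (Y t)) * indi (sBf Y = b)) * Psi a b := by
          intro Y
          calc (pw QW Y * Psi (sAf Y) (sBf Y)) * h (Y t)
              = (pw QW Y * h (Y t)) * Psi (sAf Y) (sBf Y) := by ring
            _ = (pw QW Y * h (Y t)) * ∑ a, ∑ b, indi (sAf Y = a) * indi (sBf Y = b) * Psi a b := by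
                rw [← hres2 Psi (sAf Y) (sBf Y)]
            _ = ∑ a, ∑ b, pw QW Y * ((indi (sAf Y = a) * h (Y t)) * indi (sBf Y = b)) * Psi a b := by
                rw [Finset.mul_sum]
                apply Finset.sum_congr rfl; intro a _
                rw [Finset.mul_sum]
                apply Finset.sum_congr rfl; intro b _
                ring
        rw [Finset.sum_congr rfl (fun Y _ => p1 Y)]
        rw [Finset.sum_comm]
        apply Finset.sum_congr rfl; intro a _
        rw [Finset.sum_comm]
        apply Finset.sum_congr rfl; intro b _
        rw [← Finset.sum_mul]
      rw [step1]
      have step2 : ∀ a b : ZMod r,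
          (∑ Y, pw QW Y * ((indi (sAf Y = a) * h (Y t)) * indi (sBf Y = b)))
          = (∑ Y, pw QW Y * (indi (sAf Y = a) * h (Y t))) * GB b := by
        intro a b
        have hi : (∑ Y, pw QW Y * ((indi (sAf Y = a) * h (Y t)) * indi (sBf Y = b)))
            = (∑ Y, pw QW Y * (indi (sAf Y = a) * h (Y t)))
              * (∑ Y, pw QW Y * indi (sBf Y = b)) :=
          indep QW hQW1 hVne (fun t' => t' ∈ SA)
            (fun Y => indi (sAf Y = a) * h (Y t)) (fun Y => indi (sBf Y = b))
            (fun Y₁ Y₂ hy => by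
              show indi (sAf Y₁ = a) * h (Y₁ t) = indi (sAf Y₂ = a) * h (Y₂ t)
              rw [hsA_inv Y₁ Y₂ hy, hy t htA])
            (fun Y₁ Y₂ hy => by
              show indi (sBf Y₁ = b) = indi (sBf Y₂ = b)
              rw [hsB_inv Y₁ Y₂ (fun t' ht' => hy t' (hAB t' ht'))])
        rw [hi, ← hGBeval b]
      rw [Finset.sum_congr rfl (fun a _ => Finset.sum_congr rfl (fun b _ => by rw [step2 a b]))]
      have step3 : ∀ a : ZMod r,
          (∑ b, ((∑ Y, pw QW Y * (indi (sAf Y = a) * h (Y t))) * GB b) * Psi a b)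
          = (∑ Y, pw QW Y * (indi (sAf Y = a) * h (Y t))) := by
        intro a
        have e : ∀ b : ZMod r,
            ((∑ Y, pw QW Y * (indi (sAf Y = a) * h (Y t))) * GB b) * Psi a b
            = (∑ Y, pw QW Y * (indi (sAf Y = a) * h (Y t))) * (GB b * Psi a b) := fun b => by ring
        rw [Finset.sum_congr rfl (fun b _ => e b), ← Finset.mul_sum, hPsiRow a, mul_one]
      rw [Finset.sum_congr rfl (fun a _ => step3 a)]
      have step4 : (∑ a, ∑ Y, pw QW Y * (indi (sAf Y = a) * h (Y t)))
          = ∑ Y, pw QW Y * h (Y t) := by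
        rw [Finset.sum_comm]
        apply Finset.sum_congr rfl; intro Y _
        have e : ∀ a : ZMod r, pw QW Y * (indi (sAf Y = a) * h (Y t))
            = (pw QW Y * h (Y t)) * indi (sAf Y = a) := fun a => by ring
        rw [Finset.sum_congr rfl (fun a _ => e a), ← Finset.mul_sum, sum_indi_eq_one (sAf Y),
          mul_one]
      rw [step4, hcoord]
    · -- observable lives outside the first half
      have step1 : (∑ Y, (pw QW Y * Psi (sAf Y) (sBf Y)) * h (Y t))
          = ∑ a, ∑ b, (∑ Y, pw QW Y * (indi (sAf Y = a) * (indi (sBf Y = b) * h (Y t)))) * Psi a b := by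
        have p1 : ∀ Y : (∀ t', V t'), (pw QW Y * Psi (sAf Y) (sBf Y)) * h (Y t)
            = ∑ a, ∑ b, pw QW Y * (indi (sAf Y = a) * (indi (sBf Y = b) * h (Y t))) * Psi a b := by
          intro Y
          calc (pw QW Y * Psi (sAf Y) (sBf Y)) * h (Y t)
              = (pw QW Y * h (Y t)) * Psi (sAf Y) (sBf Y) := by ring
            _ = (pw QW Y * h (Y t)) * ∑ a, ∑ b, indi (sAf Y = a) * indi (sBf Y = b) * Psi a b := by
                rw [← hres2 Psi (sAf Y) (sBf Y)]
            _ = ∑ a, ∑ b, pw QW Y * (indi (sAf Y = a) * (indi (sBf Y = b) * h (Y t))) * Psi a b := by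
                rw [Finset.mul_sum]
                apply Finset.sum_congr rfl; intro a _
                rw [Finset.mul_sum]
                apply Finset.sum_congr rfl; intro b _
                ring
        rw [Finset.sum_congr rfl (fun Y _ => p1 Y)]
        rw [Finset.sum_comm]
        apply Finset.sum_congr rfl; intro a _
        rw [Finset.sum_comm]
        apply Finset.sum_congr rfl; intro b _
        rw [← Finset.sum_mul]
      rw [step1, Finset.sum_comm]
      have step2 : ∀ b a : ZMod r,
          (∑ Y, pw QW Y * (indi (sAf Y = a) * (indi (sBf Y = b) * h (Y t))))
          = GA a * (∑ Y, pw QW Y * (indi (sBf Y = b) * h (Y t))) := by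
        intro b a
        have hi : (∑ Y, pw QW Y * (indi (sAf Y = a) * (indi (sBf Y = b) * h (Y t))))
            = (∑ Y, pw QW Y * indi (sAf Y = a))
              * (∑ Y, pw QW Y * (indi (sBf Y = b) * h (Y t))) :=
          indep QW hQW1 hVne (fun t' => t' ∈ SA)
            (fun Y => indi (sAf Y = a)) (fun Y => indi (sBf Y = b) * h (Y t))
            (fun Y₁ Y₂ hy => by
              show indi (sAf Y₁ = a) = indi (sAf Y₂ = a)
              rw [hsA_inv Y₁ Y₂ hy])
            (fun Y₁ Y₂ hy => by
              show indi (sBf Y₁ = b) * h (Y₁ t) = indi (sBf Y₂ = b) * h (Y₂ t)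
              rw [hsB_inv Y₁ Y₂ (fun t' ht' => hy t' (hAB t' ht')), hy t htA])
        rw [hi, ← hGAeval a]
      rw [Finset.sum_congr rfl (fun b _ => Finset.sum_congr rfl (fun a _ => by rw [step2 b a]))]
      have step3 : ∀ b : ZMod r,
          (∑ a, (GA a * (∑ Y, pw QW Y * (indi (sBf Y = b) * h (Y t)))) * Psi a b)
          = (∑ Y, pw QW Y * (indi (sBf Y = b) * h (Y t))) := by
        intro b
        have e : ∀ a : ZMod r,
            (GA a * (∑ Y, pw QW Y * (indi (sBf Y = b) * h (Y t)))) * Psi a b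
            = (∑ Y, pw QW Y * (indi (sBf Y = b) * h (Y t))) * (GA a * Psi a b) := fun a => by ring
        rw [Finset.sum_congr rfl (fun a _ => e a), ← Finset.mul_sum, hPsiCol b, mul_one]
      rw [Finset.sum_congr rfl (fun b _ => step3 b)]
      have step4 : (∑ b, ∑ Y, pw QW Y * (indi (sBf Y = b) * h (Y t)))
          = ∑ Y, pw QW Y * h (Y t) := by
        rw [Finset.sum_comm]
        apply Finset.sum_congr rfl; intro Y _
        have e : ∀ b : ZMod r, pw QW Y * (indi (sBf Y = b) * h (Y t))
            = (pw QW Y * h (Y t)) * indi (sBf Y = b) := fun b => by ring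
        rw [Finset.sum_congr rfl (fun b _ => e b), ← Finset.mul_sum, sum_indi_eq_one (sBf Y),
          mul_one]
      rw [step4, hcoord]

end Main

end MECaux

lemma condEnt_nonneg_of {α β : Type*} [Fintype α] [Fintype β] (π : α → β → ℝ)
    (h0 : ∀ x y, 0 ≤ π x y) : 0 ≤ condEnt π := by
  unfold condEnt
  rw [neg_nonneg]
  apply Finset.sum_nonpos
  intro y _
  apply Finset.sum_nonpos
  intro x _
  rcases eq_or_lt_of_le (h0 x y) with hz|hz
  · rw [← hz]; simp
  · have hs : π x y ≤ ∑ x', π x' y :=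
      Finset.single_le_sum (fun x' _ => h0 x' y) (Finset.mem_univ x)
    have hspos : 0 < ∑ x', π x' y := lt_of_lt_of_le hz hs
    have hdiv : π x y / (∑ x', π x' y) ≤ 1 := by
      rw [div_le_one hspos]; exact hs
    have hlog : Real.log (π x y / ∑ x', π x' y) ≤ 0 :=
      Real.log_nonpos (by positivity) hdiv
    have := mul_le_mul_of_nonneg_left hlog hz.le
    simpa using this

set_option maxHeartbeats 4000000

lemma condEnt_congr {α β : Type*} [Fintype α] (F G : Fintype β) (π : α → β → ℝ) :
    @condEnt α β _ F π = @condEnt α β _ G π := by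
  cases Subsingleton.elim F G
  rfl

/-- Theorem `hetero-unified`: heterogeneous marginals on arbitrary finite
alphabets, grouped into `m/ℓ = k` blocks of length `ℓ` (coordinates indexed by pairs
`(t, j) ∈ [k] × [ℓ]`). If each block admits a deterministic map `φ_t` into `[r]` whose
pushforward under the product law of the block is bounded below by `q̃_min > 0`, and
`m/ℓ ≥ 2·n_*` with `n_* = ⌈log(8/p_min) / (−log(1 − r·q̃_min))⌉` (`n_* = 1` when
`r·q̃_min = 1`), then `H(P‖Q_1,…,Q_m) = 0`. -/
theorem hetero_unified_exact_recovery (r : ℕ) (hr : 2 ≤ r)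
    (m ℓ k : ℕ) (hℓ : 1 ≤ ℓ) (hm : m = k * ℓ)
    (P : Fin r → ℝ) (hP : IsProbDist P) (hPfull : ∀ x, 0 < P x)
    (Y : Fin k → Fin ℓ → Type*) [∀ t j, Fintype (Y t j)]
    (Q : ∀ t j, Y t j → ℝ) (hQ : ∀ t j, IsProbDist (Q t j))
    (φ : ∀ t, (∀ j, Y t j) → Fin r)
    (qmin : ℝ) (hqminpos : 0 < qmin)
    (hrich : ∀ t (x : Fin r),
      qmin ≤ ∑ y : (∀ j, Y t j), if φ t y = x then ∏ j, Q t j (y j) else 0)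
    (pmin : ℝ) (hpmin : pmin = ⨅ x, P x)
    (nstar : ℕ)
    (hnstar : nstar = max 1 ⌈Real.log (8 / pmin) / (-Real.log (1 - (r : ℝ) * qmin))⌉₊)
    (hk : 2 * nstar ≤ k) :
    Hlist (β := fun p : Fin k × Fin ℓ => Y p.1 p.2) P (fun p => Q p.1 p.2) = 0 := by
  classical
  haveI : NeZero r := ⟨by omega⟩
  haveI hfinr : Nonempty (Fin r) := ⟨⟨0, by omega⟩⟩
  -- alphabets are nonempty
  have hYne : ∀ t j, Nonempty (Y t j) := by
    intro t j
    by_contra hc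
    rw [not_nonempty_iff] at hc
    have h1 := (hQ t j).2
    rw [Finset.univ_eq_empty, Finset.sum_empty] at h1
    norm_num at h1
  have hVne : ∀ t, Nonempty (∀ j, Y t j) := fun t => ⟨fun j => (hYne t j).some⟩
  -- total mass of each block weight
  have hQW1 : ∀ t, ∑ w : (∀ j, Y t j), (∏ j, Q t j (w j)) = 1 := by
    intro t
    have h2 := MECaux.sum_pw (κ := Fin ℓ) (Z := fun j => Y t j)
      (fun j => Q t j) (fun j => (hQ t j).2)
    simpa [MECaux.pw] using h2
  -- a bijection between Fin r and ZMod r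
  set E : Fin r ≃ ZMod r := (Fintype.equivFinOfCardEq (ZMod.card r)).symm with hE
  -- pmin facts
  have hpminle : ∀ x, pmin ≤ P x := by
    intro x
    rw [hpmin]
    exact ciInf_le (Finite.bddBelow_range P) x
  have hpmin0 : 0 < pmin := by
    obtain ⟨x₀, hx₀⟩ := Finite.exists_min P
    have he : pmin = P x₀ := by
      rw [hpmin]
      exact le_antisymm (ciInf_le (Finite.bddBelow_range P) x₀) (le_ciInf hx₀)
    rw [he]; exact hPfull x₀
  have hP'1 : ∑ d : ZMod r, P (E.symm d) = 1 := by
    rw [Equiv.sum_comp E.symm P]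
    exact hP.2
  -- floor condition in ZMod form
  have hfloor : ∀ (t : Fin k) (d : ZMod r),
      qmin ≤ ∑ w : (∀ j, Y t j), (∏ j, Q t j (w j)) * MECaux.indi (E (φ t w) = d) := by
    intro t d
    have h1 := hrich t (E.symm d)
    have e : ∀ w : (∀ j, Y t j),
        (if φ t w = E.symm d then (∏ j, Q t j (w j)) else 0)
        = (∏ j, Q t j (w j)) * MECaux.indi (E (φ t w) = d) := by
      intro w
      have hiff : (φ t w = E.symm d) ↔ (E (φ t w) = d) :=
        (Equiv.apply_eq_iff_eq_symm_apply E).symm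
      by_cases hc : φ t w = E.symm d
      · rw [if_pos hc, MECaux.indi_of (hiff.mp hc), mul_one]
      · rw [if_neg hc, MECaux.indi_not (fun hx => hc (hiff.mpr hx)), mul_zero]
    calc qmin ≤ ∑ w : (∀ j, Y t j), (if φ t w = E.symm d then (∏ j, Q t j (w j)) else 0) := h1
      _ = _ := Finset.sum_congr rfl (fun w _ => e w)
  -- r * qmin ≤ 1
  have hrq1 : (r:ℝ) * qmin ≤ 1 := by
    have hk1 : 0 < k := by
      have : 1 ≤ nstar := by rw [hnstar]; exact le_max_left _ _
      omega
    set t0 : Fin k := ⟨0, hk1⟩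
    have hsum : (∑ x : Fin r, ∑ w : (∀ j, Y t0 j),
        if φ t0 w = x then (∏ j, Q t0 j (w j)) else 0) = 1 := by
      rw [Finset.sum_comm]
      have e : ∀ w : (∀ j, Y t0 j),
          (∑ x : Fin r, if φ t0 w = x then (∏ j, Q t0 j (w j)) else 0)
          = ∏ j, Q t0 j (w j) := by
        intro w
        rw [Finset.sum_ite_eq Finset.univ (φ t0 w) (fun _ => ∏ j, Q t0 j (w j))]
        simp
      rw [Finset.sum_congr rfl (fun w _ => e w)]
      exact hQW1 t0
    calc (r:ℝ) * qmin = ∑ _x : Fin r, qmin := by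
          rw [Finset.sum_const, Finset.card_univ, Fintype.card_fin, nsmul_eq_mul]
      _ ≤ ∑ x : Fin r, ∑ w : (∀ j, Y t0 j), (if φ t0 w = x then (∏ j, Q t0 j (w j)) else 0) :=
          Finset.sum_le_sum (fun x _ => hrich t0 x)
      _ = 1 := hsum
  -- pmin ≤ 1 (needed below)
  have hpmle1 : pmin ≤ 1 := by
    obtain ⟨x₀⟩ := hfinr
    calc pmin ≤ P x₀ := hpminle x₀
      _ ≤ ∑ x, P x := Finset.single_le_sum (fun x _ => hP.1 x) (Finset.mem_univ x₀)
      _ = 1 := hP.2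
  -- the decisive numeric estimate
  have hdevn : (1 - (r:ℝ) * qmin) ^ nstar ≤ pmin / 8 := by
    have hy0 : 0 ≤ 1 - (r:ℝ)*qmin := by linarith
    have hn1 : 1 ≤ nstar := by rw [hnstar]; exact le_max_left _ _
    rcases eq_or_lt_of_le hy0 with hy|hy
    · rw [← hy, zero_pow (by omega : nstar ≠ 0)]
      positivity
    · have hrpos : (0:ℝ) < r := by
        have : 0 < r := by omega
        exact_mod_cast this
      have hy1 : (1 - (r:ℝ)*qmin) < 1 := by
        have : 0 < (r:ℝ)*qmin := mul_pos hrpos hqminpos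
        linarith
      have hL8 : (1:ℝ) < 8 / pmin := by
        rw [lt_div_iff₀ hpmin0]
        linarith
      have hL0 : 0 < Real.log (8 / pmin) := Real.log_pos hL8
      have hlogy : Real.log (1 - (r:ℝ)*qmin) < 0 := Real.log_neg hy hy1
      have hnge : (Real.log (8/pmin) / (-Real.log (1 - (r:ℝ)*qmin))) ≤ (nstar : ℝ) := by
        have h2 : (Real.log (8/pmin) / (-Real.log (1 - (r:ℝ)*qmin)))
            ≤ ((⌈Real.log (8/pmin) / (-Real.log (1 - (r:ℝ)*qmin))⌉₊ : ℕ) : ℝ) := Nat.le_ceil _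
        have h3 : ((⌈Real.log (8/pmin) / (-Real.log (1 - (r:ℝ)*qmin))⌉₊ : ℕ) : ℝ) ≤ (nstar : ℝ) := by
          rw [hnstar]
          exact_mod_cast le_max_right 1 _
        linarith
      have h1 : (1 - (r:ℝ)*qmin) ^ ((nstar : ℕ) : ℝ)
          ≤ (1 - (r:ℝ)*qmin) ^ (Real.log (8/pmin) / (-Real.log (1 - (r:ℝ)*qmin))) :=
        Real.rpow_le_rpow_of_exponent_ge hy (le_of_lt hy1) hnge
      have h2 : (1 - (r:ℝ)*qmin) ^ (Real.log (8/pmin) / (-Real.log (1 - (r:ℝ)*qmin)))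
          = pmin/8 := by
        rw [Real.rpow_def_of_pos hy]
        have hne : Real.log (1 - (r:ℝ)*qmin) ≠ 0 := ne_of_lt hlogy
        have e : Real.log (1 - (r:ℝ)*qmin) * (Real.log (8/pmin) / (-Real.log (1 - (r:ℝ)*qmin)))
            = - Real.log (8/pmin) := by
          have h2 : -Real.log (1 - (r:ℝ)*qmin) ≠ 0 := by simpa using hne
          field_simp
        rw [e, Real.exp_neg, Real.exp_log (by positivity : (0:ℝ) < 8/pmin), inv_div]
      calc (1 - (r:ℝ)*qmin) ^ nstar
          = (1 - (r:ℝ)*qmin) ^ ((nstar : ℕ) : ℝ) := (Real.rpow_natCast _ nstar).symm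
        _ ≤ _ := h1
        _ = pmin/8 := h2
  -- invoke the construction
  obtain ⟨Λ, dec, hΛ0, hΛdec, hΛmarg⟩ :=
    MECaux.main_construction (k := k) (r := r)
      (fun t => (∀ j, Y t j)) hVne
      (fun t w => ∏ j, Q t j (w j))
      (fun t w => Finset.prod_nonneg (fun j _ => (hQ t j).1 (w j)))
      hQW1
      (fun t w => E (φ t w))
      qmin hqminpos hfloor
      (fun d => P (E.symm d)) pmin hpmin0 (fun d => hpminle _) hP'1
      nstar (by rw [hnstar]; exact le_max_left _ _) hk hdevn
  -- transport to the (t, j)-indexed product space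
  set CE : ((p : Fin k × Fin ℓ) → Y p.1 p.2) ≃ (∀ t, (∀ j, Y t j)) :=
    { toFun := fun y t j => y (t, j)
      invFun := fun Yv p => Yv p.1 p.2
      left_inv := fun y => rfl
      right_inv := fun Yv => rfl } with hCE
  set π : Fin r → ((p : Fin k × Fin ℓ) → Y p.1 p.2) → ℝ :=
    fun x y => Λ (CE y) * MECaux.indi (E x = dec (CE y)) with hπ
  have hEone : ∀ c : ZMod r, (∑ x : Fin r, MECaux.indi (E x = c)) = 1 := by
    intro c
    have he : (∑ x : Fin r, MECaux.indi (E x = c))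
        = ∑ d : ZMod r, MECaux.indi (d = c) :=
      Equiv.sum_comp E (fun d => MECaux.indi (d = c))
    rw [he]
    exact MECaux.sum_indi_eq_one' c
  have hsumx : ∀ y, (∑ x' : Fin r, π x' y) = Λ (CE y) := by
    intro y
    simp only [hπ]
    rw [← Finset.mul_sum, hEone (dec (CE y)), mul_one]
  -- coupling conditions
  have hpos : ∀ x y, 0 ≤ π x y := by
    intro x y
    simp only [hπ]
    exact mul_nonneg (hΛ0 _) (MECaux.indi_nonneg _)
  have hxm : ∀ x, (∑ y, π x y) = P x := by
    intro x
    simp only [hπ]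
    have htr : (∑ y, Λ (CE y) * MECaux.indi (E x = dec (CE y)))
        = ∑ Yv : (∀ t, (∀ j, Y t j)), Λ Yv * MECaux.indi (E x = dec Yv) :=
      Equiv.sum_comp CE (fun Yv => Λ Yv * MECaux.indi (E x = dec Yv))
    rw [htr]
    have e : ∀ Yv, Λ Yv * MECaux.indi (E x = dec Yv)
        = Λ Yv * MECaux.indi (dec Yv = E x) := by
      intro Yv
      rw [MECaux.indi_congr (eq_comm)]
    rw [Finset.sum_congr rfl (fun Yv _ => e Yv), hΛdec (E x), Equiv.symm_apply_apply]
  have hym : ∀ (i : Fin k × Fin ℓ) (b : Y i.1 i.2),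
      (∑ x, ∑ y, if y i = b then π x y else 0) = Q i.1 i.2 b := by
    intro i b
    rw [Finset.sum_comm]
    have hx1 : ∀ y, (∑ x : Fin r, if y i = b then π x y else 0)
        = (if y i = b then Λ (CE y) else 0) := by
      intro y
      by_cases hyb : y i = b
      · simp only [if_pos hyb]
        exact hsumx y
      · simp only [if_neg hyb]
        exact Finset.sum_const_zero
    rw [Finset.sum_congr rfl (fun y _ => hx1 y)]
    have htr : (∑ y, if y i = b then Λ (CE y) else 0)
        = ∑ Yv : (∀ t, (∀ j, Y t j)), (if Yv i.1 i.2 = b then Λ Yv else 0) :=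
      Equiv.sum_comp CE (fun Yv => if Yv i.1 i.2 = b then Λ Yv else 0)
    rw [htr]
    have e : ∀ Yv : (∀ t, (∀ j, Y t j)), (if Yv i.1 i.2 = b then Λ Yv else 0)
        = Λ Yv * MECaux.indi (Yv i.1 i.2 = b) := by
      intro Yv
      rw [MECaux.mul_indi]
    rw [Finset.sum_congr rfl (fun Yv _ => e Yv)]
    have hmar := hΛmarg i.1 (fun w => MECaux.indi (w i.2 = b))
    rw [hmar]
    have h2 := MECaux.sum_pw_coord (κ := Fin ℓ) (Z := fun j => Y i.1 j)
      (fun j => Q i.1 j) (fun j => (hQ i.1 j).2) i.2 (fun c => MECaux.indi (c = b))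
    have h3 : (∑ w : (∀ j, Y i.1 j), (∏ j, Q i.1 j (w j)) * MECaux.indi (w i.2 = b))
        = ∑ c, Q i.1 i.2 c * MECaux.indi (c = b) := by
      simpa [MECaux.pw] using h2
    rw [h3]
    have e2 : ∀ c, Q i.1 i.2 c * MECaux.indi (c = b) = (if c = b then Q i.1 i.2 c else 0) := by
      intro c
      rw [MECaux.mul_indi]
    rw [Finset.sum_congr rfl (fun c _ => e2 c),
      Finset.sum_ite_eq' Finset.univ b (fun c => Q i.1 i.2 c)]
    simp
  -- the coupling has zero conditional entropy
  have hce : condEnt π = 0 := by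
    unfold condEnt
    rw [neg_eq_zero]
    apply Finset.sum_eq_zero
    intro y _
    apply Finset.sum_eq_zero
    intro x _
    rcases eq_or_ne (E x) (dec (CE y)) with he|he
    · have hπx : π x y = Λ (CE y) := by
        simp only [hπ]
        rw [MECaux.indi_of he, mul_one]
      rcases eq_or_ne (Λ (CE y)) 0 with h0|h0
      · rw [hπx, h0, zero_mul]
      · rw [hπx, hsumx y, div_self h0, Real.log_one, mul_zero]
    · have hπx : π x y = 0 := by
        simp only [hπ]
        rw [MECaux.indi_not he, mul_zero]
      rw [hπx, zero_mul]
  -- conclude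
  have hcoup : IsCouplingList π P (fun p => Q p.1 p.2) := by
    refine ⟨hpos, ?_, ?_⟩
    · intro x
      exact (MECaux.sum_fintype_congr _ _ _).trans (hxm x)
    · intro i b
      refine Eq.trans ?_ (hym i b)
      apply Finset.sum_congr rfl
      intro x _
      exact MECaux.sum_fintype_congr _ _ _
  unfold Hlist
  apply le_antisymm
  · refine csInf_le ⟨0, ?_⟩ ⟨π, hcoup, (condEnt_congr _ _ π).trans hce⟩
    intro z hz
    obtain ⟨π', hc', rfl⟩ := hz
    exact le_of_le_of_eq (condEnt_nonneg_of π' hc'.1) (condEnt_congr _ _ π')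
  · refine le_csInf ⟨0, ⟨π, hcoup, (condEnt_congr _ _ π).trans hce⟩⟩ ?_
    intro z hz
    obtain ⟨π', hc', rfl⟩ := hz
    exact le_of_le_of_eq (condEnt_nonneg_of π' hc'.1) (condEnt_congr _ _ π')

end
end
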